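/- arXiv:2503.22369 — 8 statements merged into one kernel-verified Lean document; each statement's English description precedes it below -/
import Mathlib

section
/- The two-sided step-down procedure run on a vector x ∈ ℝ^m selects Ŝ = S if and only if x ∈ 𝒳(S), where 𝒳(S) = ∪_{σ∈ℰ(S)} [ ( ∩_{s∈S} {x : |x_s| ≥ x̄( σ^{-1}({σ(s),…,|S|}) ∪ S^c )} ) ∩ ( ∩_{r∉S} {x : |x_r| < x̄(S^c)} ) ]. -/
/-!
Along a sorting of the `|x i|` in decreasing order the procedure rejects a prefix, ending at
the first index whose test fails. If it selects `S`, the positions in the sorted list give the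
ranking `σ`: the tail of the list starting at `s` contains `σ⁻¹({σ(s),…,|S|}) ∪ Sᶜ`, so
monotonicity of `x̄` turns each passed test into the required bound. Conversely, given `σ`,
every element of `S` beats every element outside `S`, so the first `|S|` entries of the
sorted list form `S`; at a position `j < |S|` the tail of the list is covered by
`σ⁻¹({σ(s),…,|S|}) ∪ Sᶜ` for the `σ`-least `s ∈ S` in that tail, and `|x s|` is at most the
statistic at position `j`.
-/

open MeasureTheory ProbabilityTheory Filter

variable {m : ℕ}

/-- `l` enumerates all indices of `Fin m`, sorted in descending order of `key`. -/
def SortedEnum (key : Fin m → ℝ) (l : List (Fin m)) : Prop :=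
  l.Nodup ∧ (∀ i : Fin m, i ∈ l) ∧ l.Pairwise fun i j => key j ≤ key i

/-- One pass of a step-down testing algorithm along a (sorted) list: at each step,
if the current statistic is below the threshold of the set of not-yet-rejected
hypotheses, stop; otherwise reject it and continue. -/
noncomputable def stepDownRun (xbar : Finset (Fin m) → ℝ) (key : Fin m → ℝ) :
    List (Fin m) → Finset (Fin m)
  | [] => ∅
  | h :: t =>
      if key h < xbar (insert h t.toFinset) then ∅
      else insert h (stepDownRun xbar key t)

/-- The two-sided step-down procedure run on `x` returns exactly `S`. -/
def SelectsTwoSided (xbar : Finset (Fin m) → ℝ) (x : Fin m → ℝ) (S : Finset (Fin m)) : Prop :=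
  ∃ l : List (Fin m), SortedEnum (fun i => |x i|) l ∧ stepDownRun xbar (fun i => |x i|) l = S

section SortedLists

variable {α β : Type*}

theorem List.Nodup.mem_drop_iff_notMem_take {l : List α} (hl : l.Nodup) {a : α} (ha : a ∈ l)
    (n : ℕ) : a ∈ l.drop n ↔ a ∉ l.take n := by
  refine ⟨fun hd ht => List.disjoint_take_drop hl le_rfl ht hd, fun ht => ?_⟩
  rw [← List.take_append_drop n l, List.mem_append] at ha
  exact ha.resolve_left ht

theorem List.Nodup.mem_drop_iff_le_idxOf [BEq α] [LawfulBEq α] {l : List α} (hl : l.Nodup)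
    {a : α} (ha : a ∈ l) (n : ℕ) : a ∈ l.drop n ↔ n ≤ l.idxOf a := by
  rw [hl.mem_drop_iff_notMem_take ha, List.mem_take_iff_idxOf_lt ha, not_lt]

theorem List.Nodup.toFinset_drop_eq_compl [Fintype α] [DecidableEq α] {l : List α}
    (hl : l.Nodup) (hall : ∀ a, a ∈ l) (n : ℕ) :
    (l.drop n).toFinset = (l.take n).toFinsetᶜ := by
  ext a
  rw [List.mem_toFinset, Finset.mem_compl, List.mem_toFinset, hl.mem_drop_iff_notMem_take (hall a)]

theorem List.Nodup.exists_equiv_idxOf [DecidableEq α] {l : List α} (hl : l.Nodup) (n : ℕ) :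
    ∃ σ : {a // a ∈ (l.take n).toFinset} ≃ Fin (l.take n).toFinset.card,
      ∀ a, (σ a : ℕ) = l.idxOf a.val := by
  have hmem : ∀ a : {a // a ∈ (l.take n).toFinset}, a.val ∈ l := fun a =>
    List.mem_of_mem_take (List.mem_toFinset.1 a.2)
  have hlt : ∀ a : {a // a ∈ (l.take n).toFinset}, l.idxOf a.val < (l.take n).toFinset.card := by
    intro a
    rw [List.toFinset_card_of_nodup (hl.sublist (List.take_sublist _ _)), List.length_take,
      lt_min_iff, ← List.mem_take_iff_idxOf_lt (hmem a), List.idxOf_lt_length_iff]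
    exact ⟨List.mem_toFinset.1 a.2, hmem a⟩
  let f a : Fin (l.take n).toFinset.card := ⟨l.idxOf a.val, hlt a⟩
  have hf : f.Injective := fun a b hab =>
    Subtype.ext ((List.idxOf_inj (hmem a)).1 (Fin.val_eq_of_eq hab))
  exact ⟨Equiv.ofBijective f ((Fintype.bijective_iff_injective_and_card f).2 ⟨hf, by rw [Fintype.card_coe, Fintype.card_fin]⟩),
    fun _ => rfl⟩

variable [Preorder β] {key : α → β} {l : List α}

theorem List.Pairwise.le_getElem_of_mem_drop (hl : l.Pairwise fun i j => key j ≤ key i)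
    {j : ℕ} (hj : j < l.length) {a : α} (ha : a ∈ l.drop j) : key a ≤ key l[j] := by
  have hsort := hl.drop (i := j)
  rw [List.drop_eq_getElem_cons hj] at ha hsort
  rcases List.mem_cons.1 ha with rfl | ha
  · exact le_rfl
  · exact (List.pairwise_cons.1 hsort).1 a ha

theorem List.Pairwise.toFinset_take_card_eq [DecidableEq α]
    (hl : l.Pairwise fun i j => key j ≤ key i) (hnd : l.Nodup) {S : Finset α}
    (hS : ∀ s ∈ S, s ∈ l) (hsep : ∀ s ∈ S, ∀ r ∉ S, key r < key s) :
    (l.take S.card).toFinset = S := by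
  have hcard : (l.take S.card).toFinset.card = S.card := by
    rw [List.toFinset_card_of_nodup (hnd.sublist (List.take_sublist _ _)), List.length_take,
      min_eq_left]
    calc S.card ≤ l.toFinset.card := Finset.card_le_card fun s hs => List.mem_toFinset.2 (hS s hs)
      _ = l.length := List.toFinset_card_of_nodup hnd
  by_contra hne
  obtain ⟨r, hrT, hrS⟩ := Finset.not_subset.1 fun h =>
    hne (Finset.eq_of_subset_of_card_le h hcard.ge)
  have hST : S ⊆ (l.take S.card).toFinset := by
    intro s hs
    by_contra hsT
    have hsd := (hnd.mem_drop_iff_notMem_take (hS s hs) S.card).2 (mt List.mem_toFinset.2 hsT)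
    exact (hsep s hs r hrS).not_ge (hl.rel_of_mem_take_of_mem_drop (List.mem_toFinset.1 hrT) hsd)
  rw [← Finset.eq_of_subset_of_card_le hST hcard.le] at hrT
  exact hrS hrT

end SortedLists

/-- The paper's `σ⁻¹({σ(s),…,|S|})`. -/
def rankedFrom {α β : Type*} [DecidableEq α] [LinearOrder β] {S : Finset α}
    (σ : {i // i ∈ S} → β) (s : {i // i ∈ S}) : Finset α :=
  (S.attach.filter fun h => σ s ≤ σ h).image Subtype.val

theorem exists_mem_subset_rankedFrom_union_compl {α β : Type*} [DecidableEq α] [Fintype α]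
    [LinearOrder β] {S : Finset α} (σ : {i // i ∈ S} → β) {T : Finset α}
    (hT : (T ∩ S).Nonempty) : ∃ s : {i // i ∈ S}, s.val ∈ T ∧ T ⊆ rankedFrom σ s ∪ Sᶜ := by
  obtain ⟨t, ht⟩ := hT
  rw [Finset.mem_inter] at ht
  obtain ⟨s, hs, hmin⟩ := Finset.exists_min_image (S.attach.filter fun h => h.val ∈ T) σ
    ⟨⟨t, ht.2⟩, Finset.mem_filter.2 ⟨Finset.mem_attach _ _, ht.1⟩⟩
  refine ⟨s, (Finset.mem_filter.1 hs).2, fun i hi => ?_⟩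
  by_cases hiS : i ∈ S
  · refine Finset.mem_union_left _ (Finset.mem_image.2 ⟨⟨i, hiS⟩, ?_, rfl⟩)
    exact Finset.mem_filter.2 ⟨Finset.mem_attach _ _,
      hmin ⟨i, hiS⟩ (Finset.mem_filter.2 ⟨Finset.mem_attach _ _, hi⟩)⟩
  · exact Finset.mem_union_right _ (Finset.mem_compl.2 hiS)

/-- The region `𝒳(S)` of the paper. -/
def selectionRegion (xbar : Finset (Fin m) → ℝ) (S : Finset (Fin m)) : Set (Fin m → ℝ) :=
  {x | ∃ σ : {i // i ∈ S} ≃ Fin S.card,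
    (∀ s, xbar (rankedFrom σ s ∪ Sᶜ) ≤ |x s.val|) ∧ ∀ r, r ∉ S → |x r| < xbar Sᶜ}

theorem exists_sortedEnum (key : Fin m → ℝ) : ∃ l, SortedEnum key l := by
  let l := (List.finRange m).mergeSort fun i j => decide (key j ≤ key i)
  have hperm : l.Perm (List.finRange m) := List.mergeSort_perm _ _
  refine ⟨l, hperm.nodup_iff.2 (List.nodup_finRange m),
    fun i => hperm.mem_iff.2 (List.mem_finRange i), ?_⟩
  simpa using List.pairwise_mergeSort (le := fun i j => decide (key j ≤ key i))
    (fun a b c hab hbc => by simp only [decide_eq_true_eq] at *; exact hbc.trans hab)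
    (fun a b => by simpa using le_total _ _) (List.finRange m)

def IsStopIndex (xbar : Finset (Fin m) → ℝ) (key : Fin m → ℝ) (l : List (Fin m)) (n : ℕ) :
    Prop :=
  (∀ j (hj : j < l.length), j < n → xbar (l.drop j).toFinset ≤ key l[j]) ∧
    ∀ hn : n < l.length, key l[n] < xbar (l.drop n).toFinset

theorem stepDownRun_eq_take {xbar : Finset (Fin m) → ℝ} {key : Fin m → ℝ} :
    ∀ {l : List (Fin m)} {n : ℕ},
    IsStopIndex xbar key l n → stepDownRun xbar key l = (l.take n).toFinset
  | [], _, _ => by simp [stepDownRun]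
  | a :: t, 0, h => by
    have hstop := h.2 (by simp)
    simp only [List.getElem_cons_zero, List.drop_zero, List.toFinset_cons] at hstop
    simp [stepDownRun, hstop]
  | a :: t, n + 1, h => by
    have hpass := h.1 0 (by simp) n.succ_pos
    simp only [List.getElem_cons_zero, List.drop_zero, List.toFinset_cons] at hpass
    have ht : IsStopIndex xbar key t n :=
      ⟨fun j hj hjn => by
          have hj' := h.1 (j + 1) (by simpa using hj) (by omega)
          simp only [List.getElem_cons_succ, List.drop_succ_cons] at hj'
          exact hj',
        fun hn => by
          have hn' := h.2 (by simpa using hn)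
          simp only [List.getElem_cons_succ, List.drop_succ_cons] at hn'
          exact hn'⟩
    rw [stepDownRun, if_neg hpass.not_gt, stepDownRun_eq_take ht]
    simp

theorem exists_isStopIndex (xbar : Finset (Fin m) → ℝ) (key : Fin m → ℝ) (l : List (Fin m)) :
    ∃ n, IsStopIndex xbar key l n := by
  classical
  have hP : ∃ n, ∀ hn : n < l.length, key l[n] < xbar (l.drop n).toFinset :=
    ⟨l.length, fun h => absurd h (lt_irrefl _)⟩
  refine ⟨Nat.find hP, fun j hj hjn => ?_, Nat.find_spec hP⟩
  have hfail := Nat.find_min hP hjn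
  push Not at hfail
  exact hfail.2

section Geometry

variable {xbar : Finset (Fin m) → ℝ} {x : Fin m → ℝ} {S : Finset (Fin m)}

theorem SelectsTwoSided.mem_selectionRegion
    (hxmono : ∀ B C : Finset (Fin m), B ⊆ C → xbar B ≤ xbar C)
    (h : SelectsTwoSided xbar x S) : x ∈ selectionRegion xbar S := by
  obtain ⟨l, ⟨hnd, hall, hsort⟩, hrun⟩ := h
  obtain ⟨n, hstop⟩ := exists_isStopIndex xbar (fun i => |x i|) l
  rw [stepDownRun_eq_take hstop] at hrun
  subst hrun
  have hmemS : ∀ i, i ∈ (l.take n).toFinset ↔ l.idxOf i < n := fun i => by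
    rw [List.mem_toFinset, List.mem_take_iff_idxOf_lt (hall i)]
  obtain ⟨σ, hσ⟩ := hnd.exists_equiv_idxOf n
  refine ⟨σ, fun s => ?_, fun r hr => ?_⟩
  · have hs := (hmemS s).1 s.2
    have hsub : rankedFrom σ s ∪ (l.take n).toFinsetᶜ ⊆ (l.drop (l.idxOf s.val)).toFinset := by
      intro i hi
      rw [List.mem_toFinset, hnd.mem_drop_iff_le_idxOf (hall i)]
      rcases Finset.mem_union.1 hi with hi | hi
      · obtain ⟨h, hh, rfl⟩ := Finset.mem_image.1 hi
        rw [← hσ, ← hσ, Fin.val_fin_le]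
        exact (Finset.mem_filter.1 hh).2
      · rw [Finset.mem_compl, hmemS] at hi
        omega
    calc xbar (rankedFrom σ s ∪ (l.take n).toFinsetᶜ)
        ≤ xbar (l.drop (l.idxOf s.val)).toFinset := hxmono _ _ hsub
      _ ≤ |x (l[l.idxOf s.val]'(List.idxOf_lt_length_iff.2 (hall s)))| :=
        hstop.1 _ (List.idxOf_lt_length_iff.2 (hall s)) hs
      _ = |x s| := by rw [List.getElem_idxOf]
  · have hrn : n ≤ l.idxOf r := by rw [hmemS] at hr; omega
    have hnl : n < l.length := hrn.trans_lt (List.idxOf_lt_length_iff.2 (hall r))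
    calc |x r| ≤ |x l[n]| :=
          hsort.le_getElem_of_mem_drop hnl ((hnd.mem_drop_iff_le_idxOf (hall r) n).2 hrn)
      _ < xbar (l.drop n).toFinset := hstop.2 hnl
      _ = xbar (l.take n).toFinsetᶜ := by rw [hnd.toFinset_drop_eq_compl hall]

theorem selectsTwoSided_of_mem_selectionRegion
    (hxmono : ∀ B C : Finset (Fin m), B ⊆ C → xbar B ≤ xbar C)
    (hx : x ∈ selectionRegion xbar S) : SelectsTwoSided xbar x S := by
  obtain ⟨σ, hσ, hout⟩ := hx
  obtain ⟨l, hnd, hall, hsort⟩ := exists_sortedEnum fun i => |x i|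
  have htake : (l.take S.card).toFinset = S :=
    hsort.toFinset_take_card_eq hnd (fun s _ => hall s) fun s hs r hr =>
      (hout r hr).trans_le ((hxmono _ _ Finset.subset_union_right).trans (hσ ⟨s, hs⟩))
  have hmemS : ∀ i, i ∈ S ↔ l.idxOf i < S.card := fun i => by
    conv_lhs => rw [← htake, List.mem_toFinset, List.mem_take_iff_idxOf_lt (hall i)]
  suffices hstop : IsStopIndex xbar (fun i => |x i|) l S.card by
    exact ⟨l, ⟨hnd, hall, hsort⟩, by rw [stepDownRun_eq_take hstop, htake]⟩
  refine ⟨fun j hj hjS => ?_, fun hn => ?_⟩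
  · have hjT : l[j] ∈ (l.drop j).toFinset ∩ S := by
      rw [Finset.mem_inter, List.mem_toFinset, hmemS, hnd.idxOf_getElem,
        List.drop_eq_getElem_cons hj]
      exact ⟨List.mem_cons_self, hjS⟩
    obtain ⟨s, hsT, hsub⟩ := exists_mem_subset_rankedFrom_union_compl σ ⟨_, hjT⟩
    calc xbar (l.drop j).toFinset ≤ xbar (rankedFrom σ s ∪ Sᶜ) := hxmono _ _ hsub
      _ ≤ |x s| := hσ s
      _ ≤ |x l[j]| := hsort.le_getElem_of_mem_drop hj (List.mem_toFinset.1 hsT)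
  · rw [hnd.toFinset_drop_eq_compl hall, htake]
    exact hout _ (by rw [hmemS, hnd.idxOf_getElem]; exact lt_irrefl _)

end Geometry

theorem stepdown_selection_geometry_general
    (xbar : Finset (Fin m) → ℝ)
    (hxmono : ∀ B C : Finset (Fin m), B ⊆ C → xbar B ≤ xbar C)
    (x : Fin m → ℝ) (S : Finset (Fin m)) :
    SelectsTwoSided xbar x S ↔
      ∃ σ : {i // i ∈ S} ≃ Fin S.card,
        (∀ s : {i // i ∈ S},
          xbar (((S.attach.filter fun h => σ s ≤ σ h).image Subtype.val) ∪ Sᶜ)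
            ≤ |x s.val|) ∧
        (∀ r, r ∉ S → |x r| < xbar Sᶜ) :=
  ⟨fun h => h.mem_selectionRegion hxmono, selectsTwoSided_of_mem_selectionRegion hxmono⟩

/-- **Lemma 1 (geometry of two-sided step-down testing).** The two-sided
step-down procedure run on `x` selects `Ŝ = S` if and only if there is a
bijection `σ` from `S` onto `{1,…,|S|}` (here `Fin S.card`) such that
`|x_s| ≥ x̄(σ⁻¹({σ(s),…,|S|}) ∪ Sᶜ)` for all `s ∈ S` and `|x_r| < x̄(Sᶜ)` for
all `r ∉ S`. -/
theorem stepdown_selection_geometry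
    (hm : 0 < m)
    (xbar : Finset (Fin m) → ℝ) (hxpos : ∀ B, 0 < xbar B)
    (hxmono : ∀ B C : Finset (Fin m), B ⊆ C → xbar B ≤ xbar C)
    (x : Fin m → ℝ) (S : Finset (Fin m)) :
    SelectsTwoSided xbar x S ↔
      ∃ σ : {i // i ∈ S} ≃ Fin S.card,
        (∀ s : {i // i ∈ S},
          xbar (((S.attach.filter fun h => σ s ≤ σ h).image Subtype.val) ∪ Sᶜ)
            ≤ |x s.val|) ∧
        (∀ r, r ∉ S → |x r| < xbar Sᶜ) :=
  stepdown_selection_geometry_general xbar hxmono x S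
end

section
/- Let x ∈ ℝ^m, let S ⊆ {1,…,m}, and let σ̃ ∈ ℰ(S) be a permutation that orders the selected statistics by decreasing magnitude, i.e. |x_{σ̃^{-1}(1)}| ≥ |x_{σ̃^{-1}(2)}| ≥ … ≥ |x_{σ̃^{-1}(|S|)}|. Then the two-sided step-down procedure run on x selects Ŝ = S if and only if both: (i) for every s ∈ S, |x_s| ≥ x̄( σ̃^{-1}({σ̃(s),…,|S|}) ∪ S^c ), and (ii) for every r ∉ S, |x_r| < x̄(S^c). In other words, in the union over all σ ∈ ℰ(S) characterizing the selection event it suffices to check the single sorting permutation σ̃. -/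
open MeasureTheory ProbabilityTheory Filter

variable {m : ℕ}

/-!
Along a sorted list the procedure rejects a prefix `l₁` and stops at the head of the rest `l₂`,
so it selects `S` exactly when `l₁` enumerates `S` and `l₂` enumerates `Sᶜ`. Then (ii) holds
because the procedure stops at the largest statistic of `Sᶜ`; and for `s ∈ S`, the first element
`h` of `l₁` lying in `A = σ⁻¹({σ s, …, |S|}) ∪ Sᶜ` is rejected with a remaining set containing
`A`, while `|x h| ≤ |x s|` since `σ s ≤ σ h`, which gives (i). Conversely, (i) and (ii) place all
of `S` strictly above `Sᶜ`, so `S` in `σ`-order followed by `Sᶜ` sorted is a sorted enumeration,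
and along it the remaining set when `s ∈ S` is reached is contained in `σ⁻¹({σ s, …, |S|}) ∪ Sᶜ`.
-/

theorem exists_nodup_pairwise_toFinset_eq {α : Type*} [DecidableEq α] (key : α → ℝ)
    (T : Finset α) :
    ∃ l : List α, l.Nodup ∧ l.toFinset = T ∧ l.Pairwise fun i j => key j ≤ key i := by
  let le : α → α → Bool := fun i j => decide (key j ≤ key i)
  have hperm := T.toList.mergeSort_perm le
  refine ⟨T.toList.mergeSort le, hperm.nodup_iff.2 T.nodup_toList, ?_, ?_⟩
  · rw [List.toFinset_eq_of_perm _ _ hperm, Finset.toList_toFinset]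
  · simpa [le] using List.pairwise_mergeSort (le := le)
      (fun a b c hab hbc => by
        simpa [le] using (of_decide_eq_true hbc).trans (of_decide_eq_true hab))
      (fun a b => by simpa [le] using le_total (key b) (key a)) T.toList

section SortedEnum

variable {key : Fin m → ℝ} {l₁ l₂ : List (Fin m)}

theorem SortedEnum.toFinset_right_eq_compl (h : SortedEnum key (l₁ ++ l₂)) :
    l₂.toFinset = l₁.toFinsetᶜ := by
  obtain ⟨hnd, hall, -⟩ := h
  ext i
  have := List.nodup_append.1 hnd
  simp only [List.mem_toFinset, Finset.mem_compl]
  exact ⟨fun hi₂ hi₁ => this.2.2 i hi₁ i hi₂ rfl,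
    fun hi₁ => (List.mem_append.1 (hall i)).resolve_left hi₁⟩

theorem sortedEnum_append {S : Finset (Fin m)} (hnd₁ : l₁.Nodup) (hnd₂ : l₂.Nodup)
    (hl₁ : l₁.toFinset = S) (hl₂ : l₂.toFinset = Sᶜ)
    (hs₁ : l₁.Pairwise fun i j => key j ≤ key i) (hs₂ : l₂.Pairwise fun i j => key j ≤ key i)
    (hsep : ∀ a ∈ S, ∀ b ∉ S, key b ≤ key a) :
    SortedEnum key (l₁ ++ l₂) := by
  have mem₁ : ∀ a, a ∈ l₁ ↔ a ∈ S := fun a => by rw [← hl₁, List.mem_toFinset]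
  have mem₂ : ∀ a, a ∈ l₂ ↔ a ∉ S := fun a => by
    rw [← Finset.mem_compl, ← hl₂, List.mem_toFinset]
  refine ⟨List.nodup_append.2 ⟨hnd₁, hnd₂, ?_⟩, fun i => ?_, List.pairwise_append.2 ⟨hs₁, hs₂, ?_⟩⟩
  · rintro a ha₁ b hb₂ rfl
    exact (mem₂ a).1 hb₂ ((mem₁ a).1 ha₁)
  · by_cases hi : i ∈ S
    · exact List.mem_append_left _ ((mem₁ i).2 hi)
    · exact List.mem_append_right _ ((mem₂ i).2 hi)
  · exact fun a ha b hb => hsep a ((mem₁ a).1 ha) b ((mem₂ b).1 hb)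

end SortedEnum

/-- The step-down procedure run on `l₁ ++ l₂` rejects every hypothesis of `l₁`. -/
def StepDownRejects (xbar : Finset (Fin m) → ℝ) (key : Fin m → ℝ) :
    List (Fin m) → List (Fin m) → Prop
  | [], _ => True
  | h :: t, l₂ => xbar (insert h (t ++ l₂).toFinset) ≤ key h ∧ StepDownRejects xbar key t l₂

section StepDown

variable {xbar : Finset (Fin m) → ℝ} {key : Fin m → ℝ}

theorem stepDownRun_append_of_stepDownRejects :
    ∀ {l₁ l₂ : List (Fin m)}, StepDownRejects xbar key l₁ l₂ →
      stepDownRun xbar key (l₁ ++ l₂) = l₁.toFinset ∪ stepDownRun xbar key l₂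
  | [], _, _ => by simp
  | h :: t, l₂, ⟨hh, ht⟩ => by
    rw [List.cons_append, stepDownRun, if_neg (not_lt.2 hh),
      stepDownRun_append_of_stepDownRejects ht, List.toFinset_cons, Finset.insert_union]

theorem exists_append_stepDownRejects :
    ∀ l : List (Fin m), ∃ l₁ l₂, l = l₁ ++ l₂ ∧ StepDownRejects xbar key l₁ l₂ ∧
      stepDownRun xbar key l₂ = ∅
  | [] => ⟨[], [], rfl, trivial, rfl⟩
  | h :: t => by
    by_cases hh : key h < xbar (insert h t.toFinset)
    · exact ⟨[], h :: t, rfl, trivial, by rw [stepDownRun, if_pos hh]⟩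
    · obtain ⟨l₁, l₂, rfl, hrej, hrun⟩ := exists_append_stepDownRejects t
      exact ⟨h :: l₁, l₂, rfl, ⟨not_lt.1 hh, hrej⟩, hrun⟩

theorem stepDownRun_eq_empty_iff {l : List (Fin m)}
    (hl : l.Pairwise fun i j => key j ≤ key i) :
    stepDownRun xbar key l = ∅ ↔ ∀ r ∈ l, key r < xbar l.toFinset := by
  cases l with
  | nil => simp [stepDownRun]
  | cons h t =>
    rw [stepDownRun, List.toFinset_cons]
    split_ifs with hh
    · refine iff_of_true rfl fun r hr => ?_
      rcases List.mem_cons.1 hr with rfl | hr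
      · exact hh
      · exact ((List.pairwise_cons.1 hl).1 r hr).trans_lt hh
    · exact iff_of_false (Finset.insert_ne_empty _ _) fun H => hh (H h List.mem_cons_self)

theorem StepDownRejects.exists_mem_le (hmono : Monotone xbar) {A : Finset (Fin m)} :
    ∀ {l₁ l₂ : List (Fin m)}, StepDownRejects xbar key l₁ l₂ →
      A ⊆ (l₁ ++ l₂).toFinset → (∃ a ∈ l₁, a ∈ A) → ∃ h ∈ l₁, h ∈ A ∧ xbar A ≤ key h
  | [], _, _, _, ⟨_, ha, _⟩ => absurd ha List.not_mem_nil
  | h :: t, l₂, ⟨hh, ht⟩, hA, ⟨a, ha, haA⟩ => by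
    rw [List.cons_append, List.toFinset_cons] at hA
    by_cases hhA : h ∈ A
    · exact ⟨h, List.mem_cons_self, hhA, (hmono hA).trans hh⟩
    · have hA' : A ⊆ (t ++ l₂).toFinset := fun b hb =>
        (Finset.mem_insert.1 (hA hb)).resolve_left fun e => hhA (e ▸ hb)
      have hat : a ∈ t := (List.mem_cons.1 ha).resolve_left fun e => hhA (e ▸ haA)
      obtain ⟨b, hb, hbA, hle⟩ := ht.exists_mem_le hmono hA' ⟨a, hat, haA⟩
      exact ⟨b, List.mem_cons_of_mem h hb, hbA, hle⟩

end StepDown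

section SortingPermutation

variable {S : Finset (Fin m)} (σ : {i // i ∈ S} ≃ Fin S.card)

/-- `σ⁻¹({σ s, …, |S|})` in the paper's notation. -/
def rankTail (s : {i // i ∈ S}) : Finset (Fin m) :=
  (S.attach.filter fun h => σ s ≤ σ h).image Subtype.val

variable {σ}

theorem mem_rankTail {s : {i // i ∈ S}} {a : Fin m} :
    a ∈ rankTail σ s ↔ ∃ ha : a ∈ S, σ s ≤ σ ⟨a, ha⟩ := by
  simp [rankTail]

variable (σ) in
theorem exists_list_pairwise_rank :
    ∃ L : List {i // i ∈ S}, L.Pairwise (fun a b => σ a ≤ σ b) ∧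
      (L.map Subtype.val).Nodup ∧ (L.map Subtype.val).toFinset = S := by
  refine ⟨(List.finRange S.card).map σ.symm, ?_, ?_, ?_⟩
  · exact List.pairwise_map.2 ((List.pairwise_le_finRange _).imp fun h => by simpa using h)
  · exact ((List.nodup_finRange _).map σ.symm.injective).map Subtype.val_injective
  · ext a
    simpa using ⟨fun ⟨j, hj⟩ => hj ▸ (σ.symm j).2, fun ha => ⟨σ ⟨a, ha⟩, by simp⟩⟩

variable {xbar : Finset (Fin m) → ℝ} {key : Fin m → ℝ}

theorem xbar_rankTail_union_compl_le (hmono : Monotone xbar)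
    (hsort : ∀ a b : {i // i ∈ S}, σ a ≤ σ b → key b ≤ key a) {l₁ l₂ : List (Fin m)}
    (hrej : StepDownRejects xbar key l₁ l₂) (hl₁ : l₁.toFinset = S)
    (hcover : ∀ i, i ∈ l₁ ++ l₂) (s : {i // i ∈ S}) :
    xbar (rankTail σ s ∪ Sᶜ) ≤ key s := by
  have hs : s.val ∈ rankTail σ s ∪ Sᶜ :=
    Finset.mem_union_left _ (mem_rankTail.2 ⟨s.2, le_rfl⟩)
  obtain ⟨h, hh₁, hhA, hle⟩ := hrej.exists_mem_le hmono
    (fun a _ => List.mem_toFinset.2 (hcover a)) ⟨s, by simpa [← hl₁] using s.2, hs⟩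
  have hhS : h ∈ S := by simpa [← hl₁] using hh₁
  obtain ⟨_, hσ⟩ := mem_rankTail.1 ((Finset.mem_union.1 hhA).resolve_right (by simpa using hhS))
  exact hle.trans (hsort s _ hσ)

theorem stepDownRejects_map_val (hmono : Monotone xbar)
    (hS : ∀ s : {i // i ∈ S}, xbar (rankTail σ s ∪ Sᶜ) ≤ key s) {l₂ : List (Fin m)}
    (hl₂ : l₂.toFinset ⊆ Sᶜ) :
    ∀ {L : List {i // i ∈ S}}, L.Pairwise (fun a b => σ a ≤ σ b) →
      StepDownRejects xbar key (L.map Subtype.val) l₂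
  | [], _ => trivial
  | s :: L, hL => by
    rw [List.pairwise_cons] at hL
    refine ⟨(hmono fun a ha => ?_).trans (hS s), stepDownRejects_map_val hmono hS hl₂ hL.2⟩
    simp only [Finset.mem_insert, List.mem_toFinset, List.mem_append, List.mem_map] at ha
    rcases ha with rfl | ⟨b, hb, rfl⟩ | ha
    · exact Finset.mem_union_left _ (mem_rankTail.2 ⟨s.2, le_rfl⟩)
    · exact Finset.mem_union_left _ (mem_rankTail.2 ⟨b.2, hL.1 b hb⟩)
    · exact Finset.mem_union_right _ (hl₂ (List.mem_toFinset.2 ha))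

end SortingPermutation

theorem stepdown_selection_sorting_permutation_general
    (xbar : Finset (Fin m) → ℝ)
    (hxmono : ∀ B C : Finset (Fin m), B ⊆ C → xbar B ≤ xbar C)
    (x : Fin m → ℝ) (S : Finset (Fin m))
    (σ : {i // i ∈ S} ≃ Fin S.card)
    (hsort : ∀ a b : {i // i ∈ S}, σ a ≤ σ b → |x b.val| ≤ |x a.val|) :
    SelectsTwoSided xbar x S ↔
      ((∀ s : {i // i ∈ S},
          xbar (((S.attach.filter fun h => σ s ≤ σ h).image Subtype.val) ∪ Sᶜ)
            ≤ |x s.val|) ∧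
        (∀ r, r ∉ S → |x r| < xbar Sᶜ)) := by
  have hmono : Monotone xbar := fun B C => hxmono B C
  change _ ↔ (∀ s, xbar (rankTail σ s ∪ Sᶜ) ≤ |x s.val|) ∧ _
  constructor
  · rintro ⟨l, hl, hrun⟩
    obtain ⟨l₁, l₂, rfl, hrej, hrun₂⟩ := exists_append_stepDownRejects l
    rw [stepDownRun_append_of_stepDownRejects hrej, hrun₂, Finset.union_empty] at hrun
    have hl₂ : l₂.toFinset = Sᶜ := hrun ▸ hl.toFinset_right_eq_compl
    have hstop := (stepDownRun_eq_empty_iff (List.pairwise_append.1 hl.2.2).2.1).1 hrun₂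
    refine ⟨xbar_rankTail_union_compl_le hmono hsort hrej hrun hl.2.1, fun r hr => ?_⟩
    rw [← hl₂]
    exact hstop r (List.mem_toFinset.1 (hl₂ ▸ Finset.mem_compl.2 hr))
  · rintro ⟨hrank, hcompl⟩
    obtain ⟨L, hL, hnd₁, hl₁⟩ := exists_list_pairwise_rank σ
    obtain ⟨l₂, hnd₂, hl₂, hs₂⟩ := exists_nodup_pairwise_toFinset_eq (fun i => |x i|) Sᶜ
    have hsep : ∀ a ∈ S, ∀ b ∉ S, |x b| ≤ |x a| := fun a ha b hb =>
      ((hcompl b hb).trans_le ((hmono Finset.subset_union_right).trans (hrank ⟨a, ha⟩))).le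
    refine ⟨L.map Subtype.val ++ l₂, sortedEnum_append hnd₁ hnd₂ hl₁ hl₂
      (List.pairwise_map.2 (hL.imp (hsort _ _))) hs₂ hsep, ?_⟩
    have hstop : stepDownRun xbar (fun i => |x i|) l₂ = ∅ :=
      (stepDownRun_eq_empty_iff hs₂).2 fun r hr => hl₂ ▸ hcompl r (Finset.mem_compl.1 (hl₂ ▸ List.mem_toFinset.2 hr))
    rw [stepDownRun_append_of_stepDownRejects (stepDownRejects_map_val hmono hrank hl₂.le hL),
      hstop, Finset.union_empty, hl₁]

/-- **Single sorting permutation suffices.** Let `σ` be a bijection from `S`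
onto `{1,…,|S|}` (here `Fin S.card`) ordering the selected statistics by
decreasing magnitude. Then the two-sided step-down procedure run on `x`
selects `Ŝ = S` if and only if `|x_s| ≥ x̄(σ⁻¹({σ(s),…,|S|}) ∪ Sᶜ)` for all
`s ∈ S` and `|x_r| < x̄(Sᶜ)` for all `r ∉ S`; i.e. in the union over all
permutations it suffices to check the sorting permutation. -/
theorem stepdown_selection_sorting_permutation
    (hm : 0 < m)
    (xbar : Finset (Fin m) → ℝ) (hxpos : ∀ B, 0 < xbar B)
    (hxmono : ∀ B C : Finset (Fin m), B ⊆ C → xbar B ≤ xbar C)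
    (x : Fin m → ℝ) (S : Finset (Fin m))
    (σ : {i // i ∈ S} ≃ Fin S.card)
    (hsort : ∀ a b : {i // i ∈ S}, σ a ≤ σ b → |x b.val| ≤ |x a.val|) :
    SelectsTwoSided xbar x S ↔
      ((∀ s : {i // i ∈ S},
          xbar (((S.attach.filter fun h => σ s ≤ σ h).image Subtype.val) ∪ Sᶜ)
            ≤ |x s.val|) ∧
        (∀ r, r ∉ S → |x r| < xbar Sᶜ)) :=
  stepdown_selection_sorting_permutation_general xbar hxmono x S σ hsort
end

section
/- For realized test statistics x ∈ ℝ^m, the one-sided step-up procedure selects Ŝ = S if and only if: for all h ∈ S, x_h ≥ x̄_{m−|S|+1}, and either S^c = ∅ or there exists a bijection σ from S^c onto {1,…,|S^c|} such that for all h ∉ S, x_h < x̄_{σ(h)}. -/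
open MeasureTheory Filter

variable {m : ℕ}

/-- `l` enumerates all indices of `Fin m`, sorted in ascending order of `x`. -/
def SortedEnumAsc (x : Fin m → ℝ) (l : List (Fin m)) : Prop :=
  l.Nodup ∧ (∀ i : Fin m, i ∈ l) ∧ l.Pairwise fun i j => x i ≤ x j

/-- The insignificant set produced by the one-sided step-up algorithm: walking
up the ascending-sorted list with step counter `j`, an index is declared
insignificant while its statistic is below the `j`-th threshold; as soon as a
statistic reaches its threshold the algorithm stops (all remaining indices are
significant). -/
noncomputable def stepUpInsig (xbar : ℕ → ℝ) (x : Fin m → ℝ) :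
    List (Fin m) → ℕ → Finset (Fin m)
  | [], _ => ∅
  | h :: t, j =>
      if xbar j ≤ x h then ∅
      else insert h (stepUpInsig xbar x t (j + 1))

/-- The one-sided step-up procedure run on `x` returns exactly the significant
set `S` (the complement of the insignificant set). -/
def SelectsStepUp (xbar : ℕ → ℝ) (x : Fin m → ℝ) (S : Finset (Fin m)) : Prop :=
  ∃ l : List (Fin m), SortedEnumAsc x l ∧ (stepUpInsig xbar x l 1)ᶜ = S

/-!
The procedure rejects a prefix `l₁` of its sorted enumeration `l₁ ++ l₂` and stops at the head of
`l₂` exactly when `x_{l₁[i]} < x̄_{i+1}` at every position `i` and the head of `l₂`, hence by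
sortedness every statistic in `l₂`, is at least `x̄_{|l₁|+1}`. Conversely, under these conditions
the monotone thresholds make `Sᶜ` sorted by `x` followed by `S` sorted by `x` an ascending
enumeration. The positionwise condition on `Sᶜ` is equivalent to the existence of the ranking `σ`
by a rearrangement argument: for any permutation `τ` and position `i` some `k ≥ i` has `τ k ≤ i`,
so `x_(i) ≤ x_(k) < x̄_(τ k + 1) ≤ x̄_(i + 1)`.
-/

theorem Equiv.Perm.exists_le_and_apply_le {ι : Type*} [LinearOrder ι] [LocallyFiniteOrderTop ι]
    (τ : Equiv.Perm ι) (i : ι) : ∃ k, i ≤ k ∧ τ k ≤ i := by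
  classical
  by_contra! h
  have hcard := Finset.card_le_card_of_injOn τ (s := Finset.Ici i) (t := Finset.Ioi i)
    (fun k hk => Finset.mem_Ioi.2 (h k (Finset.mem_Ici.1 hk))) τ.injective.injOn
  rw [← Finset.Ioi_insert, Finset.card_insert_of_notMem Finset.notMem_Ioi_self] at hcard
  omega

theorem exists_perm_lt_comp_iff {ι β : Type*} [LinearOrder ι] [LocallyFiniteOrderTop ι]
    [Preorder β] {f g : ι → β} (hf : Monotone f) (hg : Monotone g) :
    (∃ τ : Equiv.Perm ι, ∀ k, f k < g (τ k)) ↔ ∀ k, f k < g k := by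
  refine ⟨fun ⟨τ, hτ⟩ i => ?_, fun h => ⟨1, h⟩⟩
  obtain ⟨k, hik, hki⟩ := τ.exists_le_and_apply_le i
  exact (hf hik).trans_lt ((hτ k).trans_le (hg hki))

theorem List.exists_equiv_fin_lt_iff_forall_getElem_lt {α β : Type*} [DecidableEq α] [Preorder β]
    {x : α → β} {xbar : ℕ → β} {l : List α} (hnd : l.Nodup) (hsort : l.Pairwise (x · ≤ x ·))
    (hmono : MonotoneOn xbar (Set.Icc 1 l.length)) :
    (∃ σ : {a // a ∈ l.toFinset} ≃ Fin l.toFinset.card, ∀ h, x h.val < xbar ((σ h : ℕ) + 1)) ↔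
      ∀ i (hi : i < l.length), x l[i] < xbar (i + 1) := by
  have hcard : l.toFinset.card = l.length := List.toFinset_card_of_nodup hnd
  let e : Fin l.length ≃ {a // a ∈ l.toFinset} :=
    (hnd.getEquiv l).trans (Equiv.subtypeEquivRight fun _ => List.mem_toFinset.symm)
  have hf : Monotone fun k : Fin l.length => x l[k] := fun a b hab => by
    obtain rfl | hlt := hab.eq_or_lt
    exacts [le_rfl, List.pairwise_iff_get.1 hsort a b hlt]
  have hg : Monotone fun k : Fin l.length => xbar (k + 1) := fun a b hab =>
    hmono ⟨by omega, by omega⟩ ⟨by omega, by omega⟩ (by simpa using hab)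
  refine Iff.trans ?_ ((exists_perm_lt_comp_iff hf hg).trans Fin.forall_iff)
  constructor
  · rintro ⟨σ, hσ⟩
    exact ⟨e.trans (σ.trans (finCongr hcard)), fun k => hσ (e k)⟩
  · rintro ⟨τ, hτ⟩
    refine ⟨e.symm.trans (τ.trans (finCongr hcard.symm)), fun h => ?_⟩
    nth_rw 1 [← e.apply_symm_apply h]
    exact hτ (e.symm h)

theorem Finset.exists_list_sorted_by {α β : Type*} [DecidableEq α] [LinearOrder β]
    (T : Finset α) (x : α → β) :
    ∃ l : List α, l.Nodup ∧ l.toFinset = T ∧ l.Pairwise (x · ≤ x ·) := by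
  refine ⟨T.toList.mergeSort fun a b => decide (x a ≤ x b),
    (List.mergeSort_perm _ _).nodup_iff.2 T.nodup_toList, by ext; simp, ?_⟩
  refine (List.pairwise_mergeSort (fun a b c hab hbc => ?_) (fun a b => ?_) _).imp (by simp)
  · simp only [decide_eq_true_eq] at *
    exact hab.trans hbc
  · simpa using le_total (x a) (x b)

theorem List.Pairwise.forall_le_iff_head?_le {α β : Type*} [Preorder β] {x : α → β}
    {l : List α} (hs : l.Pairwise (x · ≤ x ·)) (c : β) :
    (∀ b ∈ l, c ≤ x b) ↔ ∀ a ∈ l.head?, c ≤ x a := by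
  refine ⟨fun h a ha => h a (List.mem_of_mem_head? ha), fun hc b hb => ?_⟩
  cases l with
  | nil => simp at hb
  | cons a t =>
    rcases List.mem_cons.1 hb with rfl | hb
    exacts [hc b rfl, (hc a rfl).trans (List.rel_of_pairwise_cons hs hb)]

theorem List.forall_lt_of_forall_getElem_lt {α β : Type*} [Preorder β] {x : α → β}
    {xbar : ℕ → β} {l : List α} (hlt : ∀ i (hi : i < l.length), x l[i] < xbar (i + 1))
    (hmono : MonotoneOn xbar (Set.Icc 1 (l.length + 1))) : ∀ a ∈ l, x a < xbar (l.length + 1) := by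
  intro a ha
  obtain ⟨i, hi, rfl⟩ := List.mem_iff_getElem.1 ha
  exact (hlt i hi).trans_le (hmono ⟨by omega, by omega⟩ ⟨by omega, le_rfl⟩ (by omega))

section StepUp

variable (xbar : ℕ → ℝ) (x : Fin m → ℝ)

/-- Started at step `j` on `l₁ ++ l₂`, the step-up walk rejects all of `l₁` and stops at the
head of `l₂`. -/
def IsStepUpSplit (j : ℕ) (l₁ l₂ : List (Fin m)) : Prop :=
  (∀ i (hi : i < l₁.length), x l₁[i] < xbar (i + j)) ∧
    ∀ a ∈ l₂.head?, xbar (l₁.length + j) ≤ x a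

variable {xbar x}

theorem stepUpInsig_append_of_isStepUpSplit {l₁ l₂ : List (Fin m)} {j : ℕ}
    (h : IsStepUpSplit xbar x j l₁ l₂) : stepUpInsig xbar x (l₁ ++ l₂) j = l₁.toFinset := by
  induction l₁ generalizing j with
  | nil =>
    cases l₂ with
    | nil => rfl
    | cons a t => simpa [stepUpInsig] using h.2 a rfl
  | cons a l₁ ih =>
    obtain ⟨hrej, hstop⟩ := h
    have ha : ¬xbar j ≤ x a := by
      simpa only [List.getElem_cons_zero, Nat.zero_add, not_le] using hrej 0 l₁.length.succ_pos
    have htail : IsStepUpSplit xbar x (j + 1) l₁ l₂ :=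
      ⟨fun i hi => by
        simpa only [List.getElem_cons_succ, Nat.add_right_comm, Nat.add_assoc]
          using hrej (i + 1) (Nat.succ_lt_succ hi),
        by simpa [Nat.add_right_comm, Nat.add_assoc] using hstop⟩
    rw [List.cons_append, stepUpInsig, if_neg ha, List.toFinset_cons, ih htail]

variable (xbar x) in
theorem exists_isStepUpSplit (l : List (Fin m)) (j : ℕ) :
    ∃ l₁ l₂, l = l₁ ++ l₂ ∧ IsStepUpSplit xbar x j l₁ l₂ := by
  induction l generalizing j with
  | nil => exact ⟨[], [], rfl, by simp [IsStepUpSplit]⟩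
  | cons a t ih =>
    by_cases ha : xbar j ≤ x a
    · exact ⟨[], a :: t, rfl, by simpa [IsStepUpSplit] using ha⟩
    obtain ⟨l₁, l₂, rfl, hrej, hstop⟩ := ih (j + 1)
    refine ⟨a :: l₁, l₂, rfl, fun i hi => ?_, ?_⟩
    · cases i with
      | zero => simpa using not_le.1 ha
      | succ i => simpa [Nat.add_right_comm, Nat.add_assoc] using hrej i (by simpa using hi)
    · simpa [Nat.add_right_comm, Nat.add_assoc] using hstop

theorem selectsStepUp_iff {S : Finset (Fin m)} :
    SelectsStepUp xbar x S ↔ ∃ l₁ l₂, SortedEnumAsc x (l₁ ++ l₂) ∧ (l₁.toFinset)ᶜ = S ∧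
      IsStepUpSplit xbar x 1 l₁ l₂ := by
  constructor
  · rintro ⟨l, hl, rfl⟩
    obtain ⟨l₁, l₂, rfl, hsplit⟩ := exists_isStepUpSplit xbar x l 1
    exact ⟨l₁, l₂, hl, by rw [stepUpInsig_append_of_isStepUpSplit hsplit], hsplit⟩
  · rintro ⟨l₁, l₂, hl, rfl, hsplit⟩
    exact ⟨_, hl, by rw [stepUpInsig_append_of_isStepUpSplit hsplit]⟩

end StepUp

theorem List.length_add_length_of_toFinset_compl {l₁ l₂ : List (Fin m)} (hnd₁ : l₁.Nodup)
    (hnd₂ : l₂.Nodup) (h : (l₁.toFinset)ᶜ = l₂.toFinset) : l₁.length + l₂.length = m := by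
  simpa [h, List.toFinset_card_of_nodup hnd₁, List.toFinset_card_of_nodup hnd₂]
    using Finset.card_add_card_compl l₁.toFinset

theorem sortedEnumAsc_append_iff {x : Fin m → ℝ} {l₁ l₂ : List (Fin m)} :
    SortedEnumAsc x (l₁ ++ l₂) ↔ (l₁.Nodup ∧ l₂.Nodup ∧ (l₁.toFinset)ᶜ = l₂.toFinset) ∧
      l₁.Pairwise (x · ≤ x ·) ∧ l₂.Pairwise (x · ≤ x ·) ∧ ∀ a ∈ l₁, ∀ b ∈ l₂, x a ≤ x b := by
  rw [SortedEnumAsc, List.nodup_append, List.pairwise_append, ← and_assoc]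
  refine and_congr_left' ?_
  simp only [Finset.ext_iff, Finset.mem_compl, List.mem_toFinset, List.mem_append]
  constructor
  · rintro ⟨⟨hnd₁, hnd₂, hdisj⟩, hcover⟩
    exact ⟨hnd₁, hnd₂, fun a => ⟨(hcover a).resolve_left, fun h₂ h₁ => hdisj a h₁ a h₂ rfl⟩⟩
  · rintro ⟨hnd₁, hnd₂, hcompl⟩
    refine ⟨⟨hnd₁, hnd₂, fun a h₁ b h₂ hab => (hcompl b).2 h₂ (hab ▸ h₁)⟩, fun a => ?_⟩
    by_cases h₁ : a ∈ l₁
    exacts [Or.inl h₁, Or.inr ((hcompl a).1 h₁)]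

section Geometry

variable {xbar : ℕ → ℝ} {x : Fin m → ℝ} {l₁ l₂ : List (Fin m)}

theorem IsStepUpSplit.le_of_mem_of_mem (h : IsStepUpSplit xbar x 1 l₁ l₂)
    (hs₂ : l₂.Pairwise (x · ≤ x ·)) (hmono : MonotoneOn xbar (Set.Icc 1 (l₁.length + l₂.length)))
    {a b : Fin m} (ha : a ∈ l₁) (hb : b ∈ l₂) : x a ≤ x b := by
  have hl₂ := List.length_pos_of_mem hb
  exact (List.forall_lt_of_forall_getElem_lt h.1 (hmono.mono (Set.Icc_subset_Icc_right (by omega)))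
    a ha).le.trans ((hs₂.forall_le_iff_head?_le _).2 h.2 b hb)

theorem isStepUpSplit_one_iff (hmono : MonotoneOn xbar (Set.Icc 1 m)) (hnd₁ : l₁.Nodup)
    (hnd₂ : l₂.Nodup) (hs₁ : l₁.Pairwise (x · ≤ x ·)) (hs₂ : l₂.Pairwise (x · ≤ x ·))
    (hcompl : (l₁.toFinset)ᶜ = l₂.toFinset) :
    IsStepUpSplit xbar x 1 l₁ l₂ ↔
      (∀ h ∈ l₂.toFinset, xbar (m - l₂.toFinset.card + 1) ≤ x h) ∧
        ((l₂.toFinset)ᶜ = ∅ ∨ ∃ σ : {i // i ∈ (l₂.toFinset)ᶜ} ≃ Fin (l₂.toFinset)ᶜ.card,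
          ∀ h : {i // i ∈ (l₂.toFinset)ᶜ}, x h.val < xbar ((σ h : ℕ) + 1)) := by
  have hsum := List.length_add_length_of_toFinset_compl hnd₁ hnd₂ hcompl
  have hcompl' : (l₂.toFinset)ᶜ = l₁.toFinset := by rw [← hcompl, compl_compl]
  have hvac : l₁ = [] → ∀ i (hi : i < l₁.length), x l₁[i] < xbar (i + 1) := by
    rintro rfl i hi
    simp at hi
  rw [List.toFinset_card_of_nodup hnd₂, show m - l₂.length = l₁.length by omega, hcompl',
    List.toFinset_eq_empty_iff, List.exists_equiv_fin_lt_iff_forall_getElem_lt hnd₁ hs₁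
      (hmono.mono (Set.Icc_subset_Icc_right (by omega))), or_iff_right_of_imp hvac,
    IsStepUpSplit, and_comm]
  refine and_congr_left' ?_
  simp only [List.mem_toFinset]
  exact (hs₂.forall_le_iff_head?_le _).symm

end Geometry

theorem stepup_selection_geometry_general
    (xbar : ℕ → ℝ) (hxmono : ∀ j k, 1 ≤ j → j ≤ k → k ≤ m → xbar j ≤ xbar k)
    (x : Fin m → ℝ) (S : Finset (Fin m)) :
    SelectsStepUp xbar x S ↔
      ((∀ h ∈ S, xbar (m - S.card + 1) ≤ x h) ∧
        (Sᶜ = (∅ : Finset (Fin m)) ∨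
          ∃ σ : {i // i ∈ Sᶜ} ≃ Fin Sᶜ.card,
            ∀ h : {i // i ∈ Sᶜ}, x h.val < xbar ((σ h : ℕ) + 1))) := by
  have hmono : MonotoneOn xbar (Set.Icc 1 m) := fun j hj k hk hjk => hxmono j k hj.1 hjk hk.2
  rw [selectsStepUp_iff]
  constructor
  · rintro ⟨l₁, l₂, hl, rfl, hsplit⟩
    obtain ⟨⟨hnd₁, hnd₂, hcompl⟩, hs₁, hs₂, -⟩ := sortedEnumAsc_append_iff.1 hl
    rw [hcompl]
    exact (isStepUpSplit_one_iff hmono hnd₁ hnd₂ hs₁ hs₂ hcompl).1 hsplit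
  · intro hgeom
    obtain ⟨l₂, hnd₂, rfl, hs₂⟩ := S.exists_list_sorted_by x
    obtain ⟨l₁, hnd₁, hl₁, hs₁⟩ := (l₂.toFinset)ᶜ.exists_list_sorted_by x
    have hcompl : (l₁.toFinset)ᶜ = l₂.toFinset := by rw [hl₁, compl_compl]
    have hsplit := (isStepUpSplit_one_iff hmono hnd₁ hnd₂ hs₁ hs₂ hcompl).2 hgeom
    have hsum := List.length_add_length_of_toFinset_compl hnd₁ hnd₂ hcompl
    refine ⟨l₁, l₂, sortedEnumAsc_append_iff.2 ⟨⟨hnd₁, hnd₂, hcompl⟩, hs₁, hs₂, ?_⟩, hcompl, hsplit⟩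
    exact fun a ha b hb =>
      hsplit.le_of_mem_of_mem hs₂ (hmono.mono (Set.Icc_subset_Icc_right hsum.le)) ha hb

/-- **Geometry of one-sided step-up testing.** For nondecreasing thresholds
`x̄_1 ≤ … ≤ x̄_m`, the step-up procedure selects `Ŝ = S` if and only if
`x_h ≥ x̄_{m-|S|+1}` for all `h ∈ S`, and either `Sᶜ = ∅` or there is a
bijection `σ` from `Sᶜ` onto `{1,…,|Sᶜ|}` (here `Fin Sᶜ.card`, shifted by one)
with `x_h < x̄_{σ(h)}` for all `h ∉ S`. -/
theorem stepup_selection_geometry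
    (hm : 0 < m)
    (xbar : ℕ → ℝ) (hxmono : ∀ j k, 1 ≤ j → j ≤ k → k ≤ m → xbar j ≤ xbar k)
    (x : Fin m → ℝ) (S : Finset (Fin m)) :
    SelectsStepUp xbar x S ↔
      ((∀ h ∈ S, xbar (m - S.card + 1) ≤ x h) ∧
        (Sᶜ = (∅ : Finset (Fin m)) ∨
          ∃ σ : {i // i ∈ Sᶜ} ≃ Fin Sᶜ.card,
            ∀ h : {i // i ∈ Sᶜ}, x h.val < xbar ((σ h : ℕ) + 1))) :=
  stepup_selection_geometry_general xbar hxmono x S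
end

section
/- Let S ⊆ {1,…,m}, s ∈ S, x ∈ ℝ^m, and z = x − Ω_{·,s} x_s. Suppose the conditional support 𝒳_s(z, S) is nonempty and that x_s lies in the union of the interiors of the (finitely many disjoint) intervals comprising 𝒳_s(z, S). Then the map θ ↦ F_s(x_s | z, θ, S) is strictly decreasing on ℝ, and moreover F_s(x_s | z, θ, S) → 0 as θ → +∞ and F_s(x_s | z, θ, S) → 1 as θ → −∞. -/
/-!
The Gaussian location family has a monotone likelihood ratio: the density of `𝓝(b, 1)` relative
to `𝓝(a, 1)` is `t ↦ exp ((b - a) t + (a² - b²) / 2)`, increasing in `t` when `a < b`. Hence,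
as the mean grows, mass on `A ∩ (x, ∞)` grows by at least the factor the ratio takes at `x`,
while mass on `A ∩ (-∞, x]` grows by strictly less; both pieces have positive mass because `x` is
interior to `A`, so the truncated CDF at `x` is strictly decreasing in the mean. Comparing instead
with a point `r` of `A` on the far side of `x` bounds the CDF (or its complement) by a multiple of
`exp (μ (x - r))`, which gives the limits. `Fcond` is this truncated CDF at the mean
`θ / √(V s s)`, a strictly increasing reparametrisation of `θ`.
-/

open MeasureTheory ProbabilityTheory Filter

variable {m : ℕ}

/-- Correlation matrix `Ω = diag(v)^{-1/2} V diag(v)^{-1/2}`. -/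
noncomputable def corrMat (V : Matrix (Fin m) (Fin m) ℝ) : Matrix (Fin m) (Fin m) ℝ :=
  Matrix.of fun h k => V h k / (Real.sqrt (V h h) * Real.sqrt (V k k))

/-- The conditional support `𝒳ₛ(z, S) = {x : Ω_{·,s} x + z ∈ 𝒳(S)}`. -/
def condSupport (xbar : Finset (Fin m) → ℝ) (V : Matrix (Fin m) (Fin m) ℝ)
    (z : Fin m → ℝ) (S : Finset (Fin m)) (s : Fin m) : Set ℝ :=
  {t : ℝ | SelectsTwoSided xbar (fun h => corrMat V h s * t + z h) S}

/-- The CDF at `x` of a `N(θs/√(V s s), 1)` random variable truncated to the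
conditional support `𝒳ₛ(z, S)`. -/
noncomputable def Fcond (xbar : Finset (Fin m) → ℝ) (V : Matrix (Fin m) (Fin m) ℝ)
    (S : Finset (Fin m)) (s : Fin m) (z : Fin m → ℝ) (θs x : ℝ) : ℝ :=
  ((gaussianReal 0 1) {ξ : ℝ | ξ + θs / Real.sqrt (V s s) ≤ x ∧
      (ξ + θs / Real.sqrt (V s s)) ∈ condSupport xbar V z S s}).toReal /
  ((gaussianReal 0 1) {ξ : ℝ | (ξ + θs / Real.sqrt (V s s)) ∈ condSupport xbar V z S s}).toReal

open Set

section GaussianLikelihoodRatio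

noncomputable def gaussianLikelihoodRatio (a b t : ℝ) : ℝ :=
  Real.exp ((b - a) * t + (a ^ 2 - b ^ 2) / 2)

variable {a b : ℝ}

lemma gaussianPDFReal_eq_likelihoodRatio_mul (a b t : ℝ) :
    gaussianPDFReal b 1 t = gaussianLikelihoodRatio a b t * gaussianPDFReal a 1 t := by
  simp only [gaussianPDFReal, gaussianLikelihoodRatio, NNReal.coe_one, mul_one]
  rw [mul_left_comm, ← Real.exp_add]
  ring_nf

lemma gaussianLikelihoodRatio_pos (a b t : ℝ) : 0 < gaussianLikelihoodRatio a b t :=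
  Real.exp_pos _

lemma gaussianLikelihoodRatio_monotone (hab : a ≤ b) : Monotone (gaussianLikelihoodRatio a b) :=
  fun _ _ h => Real.exp_le_exp.2 (by nlinarith)

lemma gaussianLikelihoodRatio_antitone (hba : b ≤ a) : Antitone (gaussianLikelihoodRatio a b) :=
  fun _ _ h => Real.exp_le_exp.2 (by nlinarith)

lemma gaussianLikelihoodRatio_strictMono (hab : a < b) :
    StrictMono (gaussianLikelihoodRatio a b) :=
  fun _ _ h => Real.exp_lt_exp.2 (by nlinarith)

lemma gaussianLikelihoodRatio_div (a b r r' : ℝ) :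
    gaussianLikelihoodRatio a b r / gaussianLikelihoodRatio a b r'
      = Real.exp ((b - a) * (r - r')) := by
  rw [gaussianLikelihoodRatio, gaussianLikelihoodRatio, ← Real.exp_sub]
  ring_nf

end GaussianLikelihoodRatio

section GaussianMeasureComparison

variable {a b κ : ℝ} {E : Set ℝ}

lemma gaussianReal_preimage_add_const (μ c : ℝ) (v : NNReal) (E : Set ℝ) :
    gaussianReal μ v ((· + c) ⁻¹' E) = gaussianReal (μ + c) v E := by
  rw [← gaussianReal_map_add_const c, ← MeasurableEquiv.coe_addRight,
    MeasurableEquiv.map_apply]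

lemma gaussianReal_real_eq_setIntegral (a : ℝ) (E : Set ℝ) :
    (gaussianReal a 1).real E = ∫ t in E, gaussianPDFReal a 1 t := by
  rw [measureReal_def, gaussianReal_apply_eq_integral a one_ne_zero,
    ENNReal.toReal_ofReal (integral_nonneg (gaussianPDFReal_nonneg a 1))]

lemma gaussianReal_real_pos {u v : ℝ} (huv : u < v) (hE : Ioo u v ⊆ E) :
    0 < (gaussianReal a 1).real E := by
  refine ENNReal.toReal_pos (fun h => ?_) (measure_ne_top _ _)
  have hvol : volume E = 0 := gaussianReal_absolutelyContinuous' a one_ne_zero h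
  exact (measure_mono_null hE hvol).not_gt (by simpa using huv)

lemma gaussianReal_real_le_mul_of_likelihoodRatio_le (hE : MeasurableSet E)
    (h : ∀ t ∈ E, gaussianLikelihoodRatio a b t ≤ κ) :
    (gaussianReal b 1).real E ≤ κ * (gaussianReal a 1).real E := by
  rw [gaussianReal_real_eq_setIntegral, gaussianReal_real_eq_setIntegral,
    ← integral_const_mul]
  refine setIntegral_mono_on (integrable_gaussianPDFReal b 1).integrableOn
    ((integrable_gaussianPDFReal a 1).integrableOn.const_mul κ) hE fun t ht => ?_
  rw [gaussianPDFReal_eq_likelihoodRatio_mul a b t]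
  exact mul_le_mul_of_nonneg_right (h t ht) (gaussianPDFReal_nonneg a 1 t)

lemma mul_gaussianReal_real_le_of_le_likelihoodRatio (hE : MeasurableSet E)
    (h : ∀ t ∈ E, κ ≤ gaussianLikelihoodRatio a b t) :
    κ * (gaussianReal a 1).real E ≤ (gaussianReal b 1).real E := by
  rw [gaussianReal_real_eq_setIntegral, gaussianReal_real_eq_setIntegral,
    ← integral_const_mul]
  refine setIntegral_mono_on ((integrable_gaussianPDFReal a 1).integrableOn.const_mul κ)
    (integrable_gaussianPDFReal b 1).integrableOn hE fun t ht => ?_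
  rw [gaussianPDFReal_eq_likelihoodRatio_mul a b t]
  exact mul_le_mul_of_nonneg_right (h t ht) (gaussianPDFReal_nonneg a 1 t)

lemma gaussianReal_real_lt_likelihoodRatio_mul {l r : ℝ} (hab : a < b) (hE : MeasurableSet E)
    (hEr : E ⊆ Iic r) (hlr : l < r) (hlE : Ioo l r ⊆ E) :
    (gaussianReal b 1).real E < gaussianLikelihoodRatio a b r * (gaussianReal a 1).real E := by
  -- on `E ∩ Iic r'` the likelihood ratio stays strictly below its value at `r`
  obtain ⟨r', hlr', hr'r⟩ := exists_between hlr
  have hleft := gaussianReal_real_le_mul_of_likelihoodRatio_le (a := a) (b := b)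
    (hE.inter (measurableSet_Iic (a := r'))) fun t ht =>
      gaussianLikelihoodRatio_monotone hab.le ht.2
  have hright := gaussianReal_real_le_mul_of_likelihoodRatio_le (a := a) (b := b)
    (hE.diff (measurableSet_Iic (a := r'))) fun t ht =>
      gaussianLikelihoodRatio_monotone hab.le (hEr ht.1)
  have hlt : gaussianLikelihoodRatio a b r' < gaussianLikelihoodRatio a b r :=
    gaussianLikelihoodRatio_strictMono hab hr'r
  have hpos : 0 < (gaussianReal a 1).real (E ∩ Iic r') :=
    gaussianReal_real_pos hlr' fun t ht => ⟨hlE ⟨ht.1, ht.2.trans hr'r⟩, ht.2.le⟩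
  rw [← measureReal_inter_add_sdiff (μ := gaussianReal b 1) (s := E) measurableSet_Iic,
    ← measureReal_inter_add_sdiff (μ := gaussianReal a 1) (s := E) (measurableSet_Iic (a := r'))]
  nlinarith

lemma gaussianReal_real_div_le {P Q : Set ℝ} {κ₁ κ₂ : ℝ} (hP : MeasurableSet P)
    (hQ : MeasurableSet Q) (hκ₁ : 0 ≤ κ₁) (hκ₂ : 0 < κ₂)
    (hPκ : ∀ t ∈ P, gaussianLikelihoodRatio a b t ≤ κ₁)
    (hQκ : ∀ t ∈ Q, κ₂ ≤ gaussianLikelihoodRatio a b t) (hQpos : 0 < (gaussianReal a 1).real Q) :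
    (gaussianReal b 1).real P / (gaussianReal b 1).real Q
      ≤ κ₁ / κ₂ * ((gaussianReal a 1).real P / (gaussianReal a 1).real Q) := by
  rw [← mul_div_mul_comm]
  exact div_le_div₀ (by positivity) (gaussianReal_real_le_mul_of_likelihoodRatio_le hP hPκ)
    (by positivity) (mul_gaussianReal_real_le_of_le_likelihoodRatio hQ hQκ)

end GaussianMeasureComparison

section TruncatedGaussian

noncomputable def truncGaussianCDF (A : Set ℝ) (x μ : ℝ) : ℝ :=
  (gaussianReal μ 1).real (A ∩ Iic x) / (gaussianReal μ 1).real A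

variable {A : Set ℝ} {x μ : ℝ}

lemma truncGaussianCDF_nonneg : 0 ≤ truncGaussianCDF A x μ :=
  div_nonneg measureReal_nonneg measureReal_nonneg

lemma truncGaussianCDF_le_one : truncGaussianCDF A x μ ≤ 1 :=
  div_le_one_of_le₀ (measureReal_mono inter_subset_left) measureReal_nonneg

lemma truncGaussianCDF_eq_div_add (A : Set ℝ) (x μ : ℝ) :
    truncGaussianCDF A x μ = (gaussianReal μ 1).real (A ∩ Iic x) /
      ((gaussianReal μ 1).real (A ∩ Iic x) + (gaussianReal μ 1).real (A \ Iic x)) := by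
  rw [truncGaussianCDF, measureReal_inter_add_sdiff measurableSet_Iic]

lemma one_sub_truncGaussianCDF (h : (gaussianReal μ 1).real A ≠ 0) :
    1 - truncGaussianCDF A x μ
      = (gaussianReal μ 1).real (A \ Iic x) / (gaussianReal μ 1).real A := by
  rw [truncGaussianCDF, one_sub_div h, ← measureReal_inter_add_sdiff (μ := gaussianReal μ 1)
    (s := A) (measurableSet_Iic (a := x)), add_sub_cancel_left]

theorem truncGaussianCDF_strictAnti (hA : MeasurableSet A) (hx : x ∈ interior A) :
    StrictAnti (truncGaussianCDF A x) := by
  obtain ⟨l, u, ⟨hlx, hxu⟩, hlu⟩ :=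
    mem_nhds_iff_exists_Ioo_subset.1 (mem_interior_iff_mem_nhds.1 hx)
  have hleft : Ioo l x ⊆ A ∩ Iic x := fun t ht => ⟨hlu ⟨ht.1, ht.2.trans hxu⟩, ht.2.le⟩
  have hright : Ioo x u ⊆ A \ Iic x := fun t ht => ⟨hlu ⟨hlx.trans ht.1, ht.2⟩, not_le.2 ht.1⟩
  intro a b hab
  have hN : (gaussianReal b 1).real (A ∩ Iic x)
      < gaussianLikelihoodRatio a b x * (gaussianReal a 1).real (A ∩ Iic x) :=
    gaussianReal_real_lt_likelihoodRatio_mul hab (hA.inter measurableSet_Iic) inter_subset_right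
      hlx hleft
  have hM : gaussianLikelihoodRatio a b x * (gaussianReal a 1).real (A \ Iic x)
      ≤ (gaussianReal b 1).real (A \ Iic x) :=
    mul_gaussianReal_real_le_of_le_likelihoodRatio (hA.diff measurableSet_Iic) fun t ht =>
      gaussianLikelihoodRatio_monotone hab.le (not_le.1 ht.2).le
  have hNa : 0 < (gaussianReal a 1).real (A ∩ Iic x) := gaussianReal_real_pos hlx hleft
  have hNb : 0 < (gaussianReal b 1).real (A ∩ Iic x) := gaussianReal_real_pos hlx hleft
  have hMa : 0 < (gaussianReal a 1).real (A \ Iic x) := gaussianReal_real_pos hxu hright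
  have hMb : 0 < (gaussianReal b 1).real (A \ Iic x) := gaussianReal_real_pos hxu hright
  rw [truncGaussianCDF_eq_div_add, truncGaussianCDF_eq_div_add,
    div_lt_div_iff₀ (by positivity) (by positivity)]
  nlinarith [mul_lt_mul_of_pos_right hN hMa, mul_le_mul_of_nonneg_left hM hNa.le]

theorem tendsto_truncGaussianCDF_atTop (hA : MeasurableSet A) (hx : x ∈ interior A) :
    Tendsto (truncGaussianCDF A x) atTop (nhds 0) := by
  obtain ⟨l, u, ⟨hlx, hxu⟩, hlu⟩ :=
    mem_nhds_iff_exists_Ioo_subset.1 (mem_interior_iff_mem_nhds.1 hx)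
  obtain ⟨r, hxr, hru⟩ := exists_between hxu
  have hQ (c : ℝ) : 0 < (gaussianReal c 1).real (A ∩ Ici r) :=
    gaussianReal_real_pos hru fun t ht => ⟨hlu ⟨(hlx.trans hxr).trans ht.1, ht.2⟩, ht.1.le⟩
  have hbound (b : ℝ) (hb : 0 ≤ b) : truncGaussianCDF A x b ≤ Real.exp (b * (x - r)) *
      ((gaussianReal 0 1).real (A ∩ Iic x) / (gaussianReal 0 1).real (A ∩ Ici r)) :=
    calc truncGaussianCDF A x b
        ≤ (gaussianReal b 1).real (A ∩ Iic x) / (gaussianReal b 1).real (A ∩ Ici r) :=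
          div_le_div_of_nonneg_left measureReal_nonneg (hQ b)
            (measureReal_mono inter_subset_left)
      _ ≤ gaussianLikelihoodRatio 0 b x / gaussianLikelihoodRatio 0 b r *
          ((gaussianReal 0 1).real (A ∩ Iic x) / (gaussianReal 0 1).real (A ∩ Ici r)) :=
          gaussianReal_real_div_le (hA.inter measurableSet_Iic) (hA.inter measurableSet_Ici)
            (gaussianLikelihoodRatio_pos 0 b x).le (gaussianLikelihoodRatio_pos 0 b r)
            (fun t ht => gaussianLikelihoodRatio_monotone hb ht.2)
            (fun t ht => gaussianLikelihoodRatio_monotone hb ht.2) (hQ 0)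
      _ = _ := by rw [gaussianLikelihoodRatio_div, sub_zero]
  refine squeeze_zero' (.of_forall fun b => truncGaussianCDF_nonneg)
    ((eventually_ge_atTop 0).mono hbound) ?_
  simpa using (Real.tendsto_exp_atBot.comp
    (tendsto_id.atTop_mul_const_of_neg (sub_neg.2 hxr))).mul_const _

theorem tendsto_truncGaussianCDF_atBot (hA : MeasurableSet A) (hx : x ∈ interior A) :
    Tendsto (truncGaussianCDF A x) atBot (nhds 1) := by
  obtain ⟨l, u, ⟨hlx, hxu⟩, hlu⟩ :=
    mem_nhds_iff_exists_Ioo_subset.1 (mem_interior_iff_mem_nhds.1 hx)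
  obtain ⟨r, hlr, hrx⟩ := exists_between hlx
  have hQ (c : ℝ) : 0 < (gaussianReal c 1).real (A ∩ Iic r) :=
    gaussianReal_real_pos hlr fun t ht => ⟨hlu ⟨ht.1, ht.2.trans (hrx.trans hxu)⟩, ht.2.le⟩
  have hbound (b : ℝ) (hb : b ≤ 0) : 1 - truncGaussianCDF A x b ≤ Real.exp (b * (x - r)) *
      ((gaussianReal 0 1).real (A \ Iic x) / (gaussianReal 0 1).real (A ∩ Iic r)) :=
    calc 1 - truncGaussianCDF A x b
        = (gaussianReal b 1).real (A \ Iic x) / (gaussianReal b 1).real A :=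
          one_sub_truncGaussianCDF ((hQ b).trans_le (measureReal_mono inter_subset_left)).ne'
      _ ≤ (gaussianReal b 1).real (A \ Iic x) / (gaussianReal b 1).real (A ∩ Iic r) :=
          div_le_div_of_nonneg_left measureReal_nonneg (hQ b)
            (measureReal_mono inter_subset_left)
      _ ≤ gaussianLikelihoodRatio 0 b x / gaussianLikelihoodRatio 0 b r *
          ((gaussianReal 0 1).real (A \ Iic x) / (gaussianReal 0 1).real (A ∩ Iic r)) :=
          gaussianReal_real_div_le (hA.diff measurableSet_Iic) (hA.inter measurableSet_Iic)
            (gaussianLikelihoodRatio_pos 0 b x).le (gaussianLikelihoodRatio_pos 0 b r)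
            (fun t ht => gaussianLikelihoodRatio_antitone hb (not_le.1 ht.2).le)
            (fun t ht => gaussianLikelihoodRatio_antitone hb ht.2) (hQ 0)
      _ = _ := by rw [gaussianLikelihoodRatio_div, sub_zero]
  have hsub : Tendsto (fun b => 1 - truncGaussianCDF A x b) atBot (nhds 0) := by
    refine squeeze_zero' (.of_forall fun b => sub_nonneg.2 truncGaussianCDF_le_one)
      ((eventually_le_atBot 0).mono hbound) ?_
    simpa using (Real.tendsto_exp_atBot.comp
      (tendsto_id.atBot_mul_const (sub_pos.2 hrx))).mul_const _
  simpa using (tendsto_const_nhds (x := (1 : ℝ))).sub hsub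

end TruncatedGaussian

lemma Fcond_eq_truncGaussianCDF (xbar : Finset (Fin m) → ℝ) (V : Matrix (Fin m) (Fin m) ℝ)
    (S : Finset (Fin m)) (s : Fin m) (z : Fin m → ℝ) (θs x : ℝ) :
    Fcond xbar V S s z θs x
      = truncGaussianCDF (condSupport xbar V z S s) x (θs / Real.sqrt (V s s)) := by
  rw [truncGaussianCDF, inter_comm, measureReal_def, measureReal_def,
    ← zero_add (θs / Real.sqrt (V s s)), ← gaussianReal_preimage_add_const,
    ← gaussianReal_preimage_add_const]
  rfl

theorem Fcond_strictAnti_and_limits_general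
    (V : Matrix (Fin m) (Fin m) ℝ) (hV : V.PosDef)
    (xbar : Finset (Fin m) → ℝ)
    (S : Finset (Fin m)) (s : Fin m)
    (x : Fin m → ℝ) (z : Fin m → ℝ)
    -- the finitely many pairwise disjoint intervals comprising `𝒳ₛ(z, S)`
    (n : ℕ) (I : Fin n → Set ℝ)
    (hI : ∀ k, (I k).OrdConnected)
    (hcover : condSupport xbar V z S s = ⋃ k, I k)
    -- `x_s` lies in the union of the interiors of these intervals
    (hx : x s ∈ ⋃ k, interior (I k)) :
    StrictAnti (fun θs => Fcond xbar V S s z θs (x s)) ∧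
    Tendsto (fun θs => Fcond xbar V S s z θs (x s)) atTop (nhds 0) ∧
    Tendsto (fun θs => Fcond xbar V S s z θs (x s)) atBot (nhds 1) := by
  have hσ : 0 < Real.sqrt (V s s) := Real.sqrt_pos.2 hV.diag_pos
  have hA : MeasurableSet (condSupport xbar V z S s) :=
    hcover ▸ MeasurableSet.iUnion fun k => (hI k).measurableSet
  have hxA : x s ∈ interior (condSupport xbar V z S s) :=
    hcover ▸ iUnion_subset (fun k => interior_mono (subset_iUnion I k)) hx
  simp only [Fcond_eq_truncGaussianCDF]
  exact ⟨(truncGaussianCDF_strictAnti hA hxA).comp_strictMono (strictMono_div_right_of_pos hσ),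
    (tendsto_truncGaussianCDF_atTop hA hxA).comp (tendsto_id.atTop_div_const hσ),
    (tendsto_truncGaussianCDF_atBot hA hxA).comp (tendsto_id.atBot_div_const hσ)⟩

/-- **Invertibility of the conditional distribution function (Lemma A.1).**
Suppose the conditional support `𝒳ₛ(z, S)` (with `z = x - Ω_{·,s} x_s`) is a
nonempty finite union of pairwise disjoint intervals and that `x_s` lies in the
union of their interiors. Then `θ ↦ F_s(x_s ∣ z, θ, S)` is strictly decreasing
on `ℝ`, tends to `0` as `θ → +∞` and tends to `1` as `θ → -∞`. -/
theorem Fcond_strictAnti_and_limits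
    (hm : 0 < m)
    (V : Matrix (Fin m) (Fin m) ℝ) (hV : V.PosDef)
    (xbar : Finset (Fin m) → ℝ) (hxpos : ∀ B, 0 < xbar B)
    (hxmono : ∀ B C : Finset (Fin m), B ⊆ C → xbar B ≤ xbar C)
    (S : Finset (Fin m)) (s : Fin m) (hs : s ∈ S)
    (x : Fin m → ℝ) (z : Fin m → ℝ)
    (hz : ∀ h, z h = x h - corrMat V h s * x s)
    (hne : (condSupport xbar V z S s).Nonempty)
    -- the finitely many pairwise disjoint intervals comprising `𝒳ₛ(z, S)`
    (n : ℕ) (I : Fin n → Set ℝ)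
    (hI : ∀ k, (I k).OrdConnected)
    (hdisj : Pairwise fun k k' => Disjoint (I k) (I k'))
    (hcover : condSupport xbar V z S s = ⋃ k, I k)
    -- `x_s` lies in the union of the interiors of these intervals
    (hx : x s ∈ ⋃ k, interior (I k)) :
    StrictAnti (fun θs => Fcond xbar V S s z θs (x s)) ∧
    Tendsto (fun θs => Fcond xbar V S s z θs (x s)) atTop (nhds 0) ∧
    Tendsto (fun θs => Fcond xbar V S s z θs (x s)) atBot (nhds 1) :=
  Fcond_strictAnti_and_limits_general V hV xbar S s x z n I hI hcover hx
end

section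
/- Let σ > 0 and let −∞ ≤ l_1 < u_1 < l_2 < u_2 < … < l_K < u_K ≤ ∞ be boundaries of K ≥ 1 disjoint intervals, and let T = ∪_{k=1}^K [l_k, u_k]. For μ ∈ ℝ, let F(x; μ, σ) denote the cumulative distribution function of a random variable X ~ N(μ, σ²) conditioned on the event X ∈ T. Then for every fixed x ∈ ∪_{k=1}^K (l_k, u_k): (1) the map μ ↦ F(x; μ, σ) is strictly decreasing on ℝ; and (2) F(x; μ, σ) → 0 as μ → +∞ and F(x; μ, σ) → 1 as μ → −∞. -/
/-!
The Gaussian family has a monotone likelihood ratio: for `μ < μ'` and `s < t`,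
`φ_{μ'}(s) φ_μ(t) < φ_μ(s) φ_{μ'}(t)`. Splitting the truncation set `T` at `x` into
`A = T ∩ (-∞, x]` and `B = T ∩ (x, ∞)` and pivoting at `x`, this gives
`P_{μ'}(A) P_μ(B) < P_μ(A) P_{μ'}(B)`, i.e. strict decrease of
`F = P(A) / (P(A) + P(B))`. For the limits, `x` is interior to `T`, so `B` contains some
`(x, d]`, where the density is at least `φ_μ(x)` once `μ ≥ d`; while the Gaussian tail beyond
`x` is at most `φ_μ(x) σ² / |μ - x|` because the log-density lies below its tangent at `x`.
Hence `P(A) / P(B) = O(1 / μ)` as `μ → ∞`, and symmetrically as `μ → -∞`.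
-/

open MeasureTheory ProbabilityTheory Filter Topology Set
open scoped NNReal Real

lemma setIntegral_pos_of_forall_pos {X : Type*} [MeasurableSpace X] {ν : Measure X}
    {f : X → ℝ} {s : Set X} (hs : MeasurableSet s) (hνs : ν s ≠ 0)
    (hf : ∀ y ∈ s, 0 < f y) (hfi : IntegrableOn f s ν) : 0 < ∫ y in s, f y ∂ν := by
  rw [setIntegral_pos_iff_support_of_nonneg_ae
      ((ae_restrict_mem hs).mono fun y hy => (hf y hy).le) hfi,
    (inter_eq_right.mpr fun y hy => (hf y hy).ne' : Function.support f ∩ s = s)]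
  exact pos_iff_ne_zero.mpr hνs

lemma tendsto_div_add_of_tendsto_div {α : Type*} {l : Filter α} {a b : α → ℝ}
    (ha : ∀ i, 0 ≤ a i) (hb : ∀ i, 0 < b i) (h : Tendsto (fun i => a i / b i) l (𝓝 0)) :
    Tendsto (fun i => a i / (a i + b i)) l (𝓝 0) :=
  squeeze_zero (fun i => div_nonneg (ha i) (add_nonneg (ha i) (hb i).le))
    (fun i => div_le_div_of_nonneg_left (ha i) (hb i) (le_add_of_nonneg_left (ha i))) h

lemma Real.volume_ne_zero_of_mem_nhdsLE {A : Set ℝ} {x : ℝ} (hA : A ∈ 𝓝[≤] x) :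
    volume A ≠ 0 := by
  obtain ⟨c, hcx, hcA⟩ := mem_nhdsLE_iff_exists_Icc_subset.mp hA
  exact ((by simpa using hcx : 0 < volume (Icc c x)).trans_le (measure_mono hcA)).ne'

lemma Real.volume_ne_zero_of_mem_nhdsGT {B : Set ℝ} {x : ℝ} (hB : B ∈ 𝓝[>] x) :
    volume B ≠ 0 := by
  obtain ⟨d, hxd, hdB⟩ := mem_nhdsGT_iff_exists_Ioc_subset.mp hB
  exact ((by simpa using hxd : 0 < volume (Ioc x d)).trans_le (measure_mono hdB)).ne'

namespace ProbabilityTheory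

variable {v : ℝ≥0} {μ μ' s t x : ℝ} {A B : Set ℝ}

lemma gaussianPDFReal_mul_gaussianPDFReal (μ μ' s t : ℝ) :
    gaussianPDFReal μ' v s * gaussianPDFReal μ v t =
      gaussianPDFReal μ v s * gaussianPDFReal μ' v t * Real.exp ((s - t) * (μ' - μ) / v) := by
  simp only [gaussianPDFReal]
  calc _ = (√(2 * π * v))⁻¹ * (√(2 * π * v))⁻¹ *
        Real.exp (-(s - μ') ^ 2 / (2 * v) + -(t - μ) ^ 2 / (2 * v)) := by
          rw [Real.exp_add]; ring
    _ = (√(2 * π * v))⁻¹ * (√(2 * π * v))⁻¹ * Real.exp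
        (-(s - μ) ^ 2 / (2 * v) + -(t - μ') ^ 2 / (2 * v) + (s - t) * (μ' - μ) / v) := by
          congr 2; ring
    _ = _ := by rw [Real.exp_add, Real.exp_add]; ring

lemma gaussianPDFReal_mul_le_mul (hμ : μ ≤ μ') (hst : s ≤ t) :
    gaussianPDFReal μ' v s * gaussianPDFReal μ v t ≤
      gaussianPDFReal μ v s * gaussianPDFReal μ' v t := by
  rw [gaussianPDFReal_mul_gaussianPDFReal]
  refine mul_le_of_le_one_right
    (mul_nonneg (gaussianPDFReal_nonneg _ _ _) (gaussianPDFReal_nonneg _ _ _))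
    (Real.exp_le_one_iff.mpr (div_nonpos_of_nonpos_of_nonneg
      (mul_nonpos_of_nonpos_of_nonneg (sub_nonpos.mpr hst) (sub_nonneg.mpr hμ)) v.coe_nonneg))

lemma gaussianPDFReal_mul_lt_mul (hv : v ≠ 0) (hμ : μ < μ') (hst : s < t) :
    gaussianPDFReal μ' v s * gaussianPDFReal μ v t <
      gaussianPDFReal μ v s * gaussianPDFReal μ' v t := by
  rw [gaussianPDFReal_mul_gaussianPDFReal]
  refine mul_lt_of_lt_one_right
    (mul_pos (gaussianPDFReal_pos _ _ _ hv) (gaussianPDFReal_pos _ _ _ hv))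
    (Real.exp_lt_one_iff.mpr (div_neg_of_neg_of_pos
      (mul_neg_of_neg_of_pos (sub_neg.mpr hst) (sub_pos.mpr hμ)) (by positivity)))

lemma gaussianPDFReal_le_mul_exp (μ x t : ℝ) :
    gaussianPDFReal μ v t ≤ gaussianPDFReal μ v x * Real.exp ((μ - x) * (t - x) / v) := by
  calc gaussianPDFReal μ v t = gaussianPDFReal μ v x * Real.exp ((μ - x) * (t - x) / v) *
        Real.exp (-(t - x) ^ 2 / (2 * v)) := by
          simp only [gaussianPDFReal, mul_assoc, ← Real.exp_add]
          congr 2; ring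
    _ ≤ _ := mul_le_of_le_one_right
        (mul_nonneg (gaussianPDFReal_nonneg _ _ _) (Real.exp_pos _).le)
        (Real.exp_le_one_iff.mpr
          (div_nonpos_of_nonpos_of_nonneg (neg_nonpos.mpr (sq_nonneg _)) (by positivity)))

lemma gaussianPDFReal_le_of_mem_uIcc (ht : t ∈ uIcc x μ) :
    gaussianPDFReal μ v x ≤ gaussianPDFReal μ v t := by
  have hdist : (t - μ) ^ 2 ≤ (x - μ) ^ 2 :=
    sq_le_sq.mpr (by simpa only [abs_sub_comm] using abs_sub_right_of_mem_uIcc ht)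
  simp only [gaussianPDFReal]
  gcongr

lemma gaussianReal_real_apply_eq_integral (hv : v ≠ 0) (μ : ℝ) (A : Set ℝ) :
    (gaussianReal μ v).real A = ∫ t in A, gaussianPDFReal μ v t := by
  rw [measureReal_def, gaussianReal_apply_eq_integral μ hv,
    ENNReal.toReal_ofReal (integral_nonneg fun t => gaussianPDFReal_nonneg μ v t)]

lemma setIntegral_gaussianPDFReal_nonneg (μ : ℝ) (A : Set ℝ) :
    0 ≤ ∫ t in A, gaussianPDFReal μ v t :=
  integral_nonneg fun t => gaussianPDFReal_nonneg μ v t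

lemma setIntegral_gaussianPDFReal_pos (hv : v ≠ 0) (μ : ℝ) (hA : MeasurableSet A)
    (hA0 : volume A ≠ 0) : 0 < ∫ t in A, gaussianPDFReal μ v t :=
  setIntegral_pos_of_forall_pos hA hA0 (fun t _ => gaussianPDFReal_pos μ v t hv)
    (integrable_gaussianPDFReal μ v).integrableOn

lemma setIntegral_gaussianPDFReal_mono_set (μ : ℝ) (hAB : A ⊆ B) :
    ∫ t in A, gaussianPDFReal μ v t ≤ ∫ t in B, gaussianPDFReal μ v t :=
  setIntegral_mono_set (integrable_gaussianPDFReal μ v).integrableOn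
    (ae_of_all _ fun t => gaussianPDFReal_nonneg μ v t) hAB.eventuallyLE

lemma setIntegral_Iic_gaussianPDFReal_le (hv : v ≠ 0) (hx : x < μ) :
    ∫ t in Iic x, gaussianPDFReal μ v t ≤ gaussianPDFReal μ v x * (v / (μ - x)) := by
  set β := (μ - x) / v with hβ_def
  have hβ : 0 < β := div_pos (sub_pos.mpr hx) (by positivity)
  calc ∫ t in Iic x, gaussianPDFReal μ v t
      ≤ ∫ t in Iic x, gaussianPDFReal μ v x * Real.exp (-(β * x)) * Real.exp (β * t) := by
        refine setIntegral_mono (integrable_gaussianPDFReal μ v).integrableOn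
          ((integrableOn_exp_mul_Iic hβ x).const_mul _) fun t => ?_
        refine (gaussianPDFReal_le_mul_exp μ x t).trans_eq ?_
        rw [mul_assoc, ← Real.exp_add, hβ_def]
        ring_nf
    _ = gaussianPDFReal μ v x * (v / (μ - x)) := by
        rw [integral_const_mul, integral_exp_mul_Iic hβ, mul_assoc, mul_div_assoc',
          ← Real.exp_add, neg_add_cancel, Real.exp_zero, one_div, inv_div]

lemma setIntegral_Ioi_gaussianPDFReal_le (hv : v ≠ 0) (hx : μ < x) :
    ∫ t in Ioi x, gaussianPDFReal μ v t ≤ gaussianPDFReal μ v x * (v / (x - μ)) := by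
  set β := (μ - x) / v with hβ_def
  have hβ : β < 0 := div_neg_of_neg_of_pos (sub_neg.mpr hx) (by positivity)
  calc ∫ t in Ioi x, gaussianPDFReal μ v t
      ≤ ∫ t in Ioi x, gaussianPDFReal μ v x * Real.exp (-(β * x)) * Real.exp (β * t) := by
        refine setIntegral_mono (integrable_gaussianPDFReal μ v).integrableOn
          ((integrableOn_exp_mul_Ioi hβ x).const_mul _) fun t => ?_
        refine (gaussianPDFReal_le_mul_exp μ x t).trans_eq ?_
        rw [mul_assoc, ← Real.exp_add, hβ_def]
        ring_nf
    _ = gaussianPDFReal μ v x * (v / (x - μ)) := by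
        rw [integral_const_mul, integral_exp_mul_Ioi hβ, mul_assoc, mul_div_assoc', mul_neg,
          ← Real.exp_add, neg_add_cancel, Real.exp_zero, neg_div, ← div_neg, neg_div', neg_sub,
          one_div_div]

lemma measureReal_mul_gaussianPDFReal_le_setIntegral (hA : MeasurableSet A)
    (hAx : A ⊆ uIcc x μ) :
    volume.real A * gaussianPDFReal μ v x ≤ ∫ t in A, gaussianPDFReal μ v t := by
  rw [mul_comm]
  exact setIntegral_ge_of_const_le_real hA
    (measure_ne_top_of_subset hAx isCompact_uIcc.measure_lt_top.ne)
    (fun t ht => gaussianPDFReal_le_of_mem_uIcc (hAx ht))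
    (integrable_gaussianPDFReal μ v).integrableOn

lemma mul_setIntegral_gaussianPDFReal_le (hμ : μ ≤ μ') (hA : MeasurableSet A)
    (hAx : A ⊆ Iic x) :
    gaussianPDFReal μ v x * ∫ t in A, gaussianPDFReal μ' v t ≤
      gaussianPDFReal μ' v x * ∫ t in A, gaussianPDFReal μ v t := by
  rw [← integral_const_mul, ← integral_const_mul]
  refine setIntegral_mono_on ((integrable_gaussianPDFReal μ' v).integrableOn.const_mul _)
    ((integrable_gaussianPDFReal μ v).integrableOn.const_mul _) hA fun t ht => ?_
  linarith [gaussianPDFReal_mul_le_mul (v := v) hμ (hAx ht)]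

lemma mul_setIntegral_gaussianPDFReal_lt (hv : v ≠ 0) (hμ : μ < μ') (hB : MeasurableSet B)
    (hBx : B ⊆ Ioi x) (hB0 : volume B ≠ 0) :
    gaussianPDFReal μ' v x * ∫ t in B, gaussianPDFReal μ v t <
      gaussianPDFReal μ v x * ∫ t in B, gaussianPDFReal μ' v t := by
  have hint : ∀ μ c, IntegrableOn (fun t => c * gaussianPDFReal μ v t) B := fun μ c =>
    (integrable_gaussianPDFReal μ v).integrableOn.const_mul c
  rw [← sub_pos, ← integral_const_mul, ← integral_const_mul,
    ← integral_sub (hint _ _) (hint _ _)]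
  exact setIntegral_pos_of_forall_pos hB hB0
    (fun t ht => sub_pos.mpr (gaussianPDFReal_mul_lt_mul hv hμ (hBx ht)))
    ((hint _ _).sub (hint _ _))

lemma setIntegral_gaussianPDFReal_mul_lt_mul (hv : v ≠ 0) (hμ : μ < μ')
    (hA : MeasurableSet A) (hB : MeasurableSet B) (hAx : A ⊆ Iic x) (hBx : B ⊆ Ioi x)
    (hA0 : volume A ≠ 0) (hB0 : volume B ≠ 0) :
    (∫ t in A, gaussianPDFReal μ' v t) * ∫ t in B, gaussianPDFReal μ v t <
      (∫ t in A, gaussianPDFReal μ v t) * ∫ t in B, gaussianPDFReal μ' v t := by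
  refine lt_of_mul_lt_mul_left ?_ (gaussianPDFReal_nonneg μ v x)
  calc gaussianPDFReal μ v x * ((∫ t in A, gaussianPDFReal μ' v t) *
        ∫ t in B, gaussianPDFReal μ v t)
      = (gaussianPDFReal μ v x * ∫ t in A, gaussianPDFReal μ' v t) *
        ∫ t in B, gaussianPDFReal μ v t := by ring
    _ ≤ (gaussianPDFReal μ' v x * ∫ t in A, gaussianPDFReal μ v t) *
        ∫ t in B, gaussianPDFReal μ v t :=
      mul_le_mul_of_nonneg_right (mul_setIntegral_gaussianPDFReal_le hμ.le hA hAx)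
        (setIntegral_gaussianPDFReal_nonneg μ B)
    _ = (∫ t in A, gaussianPDFReal μ v t) *
        (gaussianPDFReal μ' v x * ∫ t in B, gaussianPDFReal μ v t) := by ring
    _ < (∫ t in A, gaussianPDFReal μ v t) *
        (gaussianPDFReal μ v x * ∫ t in B, gaussianPDFReal μ' v t) :=
      mul_lt_mul_of_pos_left (mul_setIntegral_gaussianPDFReal_lt hv hμ hB hBx hB0)
        (setIntegral_gaussianPDFReal_pos hv μ hA hA0)
    _ = gaussianPDFReal μ v x * ((∫ t in A, gaussianPDFReal μ v t) *
        ∫ t in B, gaussianPDFReal μ' v t) := by ring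

lemma tendsto_setIntegral_gaussianPDFReal_div_atTop (hv : v ≠ 0) (hAx : A ⊆ Iic x)
    (hBx : B ∈ 𝓝[>] x) :
    Tendsto (fun μ => (∫ t in A, gaussianPDFReal μ v t) / ∫ t in B, gaussianPDFReal μ v t)
      atTop (𝓝 0) := by
  obtain ⟨d, hxd : x < d, hdB⟩ := mem_nhdsGT_iff_exists_Ioc_subset.mp hBx
  have hbound : ∀ μ, d ≤ μ →
      (∫ t in A, gaussianPDFReal μ v t) / (∫ t in B, gaussianPDFReal μ v t) ≤
        v / (d - x) * (μ - x)⁻¹ := by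
    intro μ hdμ
    have hgx := gaussianPDFReal_pos μ v x hv
    have hA_le : ∫ t in A, gaussianPDFReal μ v t ≤ gaussianPDFReal μ v x * (v / (μ - x)) :=
      (setIntegral_gaussianPDFReal_mono_set μ hAx).trans
        (setIntegral_Iic_gaussianPDFReal_le hv (hxd.trans_le hdμ))
    have hB_ge : (d - x) * gaussianPDFReal μ v x ≤ ∫ t in B, gaussianPDFReal μ v t := by
      calc (d - x) * gaussianPDFReal μ v x
          = volume.real (Ioc x d) * gaussianPDFReal μ v x := by
            rw [Real.volume_real_Ioc_of_le hxd.le]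
        _ ≤ ∫ t in Ioc x d, gaussianPDFReal μ v t :=
            measureReal_mul_gaussianPDFReal_le_setIntegral measurableSet_Ioc
              (Ioc_subset_Icc_self.trans ((Icc_subset_Icc_right hdμ).trans Icc_subset_uIcc))
        _ ≤ _ := setIntegral_gaussianPDFReal_mono_set μ hdB
    calc _ ≤ gaussianPDFReal μ v x * (v / (μ - x)) / ((d - x) * gaussianPDFReal μ v x) :=
          div_le_div₀ ((setIntegral_gaussianPDFReal_nonneg μ A).trans hA_le) hA_le
            (mul_pos (sub_pos.mpr hxd) hgx) hB_ge
      _ = v / (d - x) * (μ - x)⁻¹ := by field_simp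
  have hlim : Tendsto (fun μ : ℝ => v / (d - x) * (μ - x)⁻¹) atTop (𝓝 0) := by
    simpa [sub_eq_add_neg] using (tendsto_inv_atTop_zero.comp
      (tendsto_atTop_add_const_right _ (-x) tendsto_id)).const_mul (v / (d - x) : ℝ)
  exact squeeze_zero' (Eventually.of_forall fun μ => div_nonneg
      (setIntegral_gaussianPDFReal_nonneg μ A) (setIntegral_gaussianPDFReal_nonneg μ B))
    ((eventually_ge_atTop d).mono hbound) hlim

lemma tendsto_setIntegral_gaussianPDFReal_div_atBot (hv : v ≠ 0) (hBx : B ⊆ Ioi x)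
    (hAx : A ∈ 𝓝[≤] x) :
    Tendsto (fun μ => (∫ t in B, gaussianPDFReal μ v t) / ∫ t in A, gaussianPDFReal μ v t)
      atBot (𝓝 0) := by
  obtain ⟨c, hcx, hcA⟩ := mem_nhdsLE_iff_exists_Icc_subset.mp hAx
  have hbound : ∀ μ, μ ≤ c →
      (∫ t in B, gaussianPDFReal μ v t) / (∫ t in A, gaussianPDFReal μ v t) ≤
        v / (x - c) * (x - μ)⁻¹ := by
    intro μ hμc
    have hgx := gaussianPDFReal_pos μ v x hv
    have hB_le : ∫ t in B, gaussianPDFReal μ v t ≤ gaussianPDFReal μ v x * (v / (x - μ)) :=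
      (setIntegral_gaussianPDFReal_mono_set μ hBx).trans
        (setIntegral_Ioi_gaussianPDFReal_le hv (hμc.trans_lt hcx))
    have hA_ge : (x - c) * gaussianPDFReal μ v x ≤ ∫ t in A, gaussianPDFReal μ v t := by
      calc (x - c) * gaussianPDFReal μ v x
          = volume.real (Icc c x) * gaussianPDFReal μ v x := by
            rw [Real.volume_real_Icc_of_le hcx.le]
        _ ≤ ∫ t in Icc c x, gaussianPDFReal μ v t :=
            measureReal_mul_gaussianPDFReal_le_setIntegral measurableSet_Icc
              ((Icc_subset_Icc_left hμc).trans Icc_subset_uIcc')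
        _ ≤ _ := setIntegral_gaussianPDFReal_mono_set μ hcA
    calc _ ≤ gaussianPDFReal μ v x * (v / (x - μ)) / ((x - c) * gaussianPDFReal μ v x) :=
          div_le_div₀ ((setIntegral_gaussianPDFReal_nonneg μ B).trans hB_le) hB_le
            (mul_pos (sub_pos.mpr hcx) hgx) hA_ge
      _ = v / (x - c) * (x - μ)⁻¹ := by field_simp
  have hlim : Tendsto (fun μ : ℝ => v / (x - c) * (x - μ)⁻¹) atBot (𝓝 0) := by
    simpa [← sub_eq_add_neg] using (tendsto_inv_atTop_zero.comp
      (tendsto_atTop_add_const_left _ x tendsto_neg_atBot_atTop)).const_mul (v / (x - c) : ℝ)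
  exact squeeze_zero' (Eventually.of_forall fun μ => div_nonneg
      (setIntegral_gaussianPDFReal_nonneg μ B) (setIntegral_gaussianPDFReal_nonneg μ A))
    ((eventually_le_atBot c).mono hbound) hlim

/-- `F(x; μ, σ)` of the paper, with `v = σ²`. -/
noncomputable def truncGaussianCDF (v : ℝ≥0) (T : Set ℝ) (μ x : ℝ) : ℝ :=
  (gaussianReal μ v).real (T ∩ Iic x) / (gaussianReal μ v).real T

variable {T : Set ℝ}

lemma truncGaussianCDF_eq (hv : v ≠ 0) :
    truncGaussianCDF v T μ x = (∫ t in T ∩ Iic x, gaussianPDFReal μ v t) /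
      ((∫ t in T ∩ Iic x, gaussianPDFReal μ v t) +
        ∫ t in T \ Iic x, gaussianPDFReal μ v t) := by
  rw [truncGaussianCDF, ← measureReal_inter_add_sdiff (s := T) measurableSet_Iic,
    gaussianReal_real_apply_eq_integral hv, gaussianReal_real_apply_eq_integral hv]

lemma inter_Iic_mem_nhdsLE (hT : T ∈ 𝓝 x) : T ∩ Iic x ∈ 𝓝[≤] x :=
  inter_mem (mem_nhdsWithin_of_mem_nhds hT) self_mem_nhdsWithin

lemma sdiff_Iic_mem_nhdsGT (hT : T ∈ 𝓝 x) : T \ Iic x ∈ 𝓝[>] x := by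
  simpa only [compl_Iic] using sdiff_mem_nhdsWithin_compl hT (Iic x)

lemma sdiff_Iic_subset_Ioi : T \ Iic x ⊆ Ioi x := by
  rw [sdiff_eq, compl_Iic]
  exact inter_subset_right

theorem strictAnti_truncGaussianCDF (hv : v ≠ 0) (hTm : MeasurableSet T) (hT : T ∈ 𝓝 x) :
    StrictAnti (truncGaussianCDF v T · x) := by
  intro μ μ' hμ
  have hA := hTm.inter (measurableSet_Iic (a := x))
  have hB := hTm.diff (measurableSet_Iic (a := x))
  have hA0 := Real.volume_ne_zero_of_mem_nhdsLE (inter_Iic_mem_nhdsLE hT)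
  have hB0 := Real.volume_ne_zero_of_mem_nhdsGT (sdiff_Iic_mem_nhdsGT hT)
  have hpos := fun μ => add_pos (setIntegral_gaussianPDFReal_pos (v := v) hv μ hA hA0)
    (setIntegral_gaussianPDFReal_pos hv μ hB hB0)
  simp only [truncGaussianCDF_eq hv]
  rw [div_lt_div_iff₀ (hpos μ') (hpos μ)]
  linarith [setIntegral_gaussianPDFReal_mul_lt_mul hv hμ hA hB inter_subset_right
    sdiff_Iic_subset_Ioi hA0 hB0]

theorem tendsto_truncGaussianCDF_atTop (hv : v ≠ 0) (hTm : MeasurableSet T) (hT : T ∈ 𝓝 x) :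
    Tendsto (truncGaussianCDF v T · x) atTop (𝓝 0) := by
  simp only [truncGaussianCDF_eq hv]
  exact tendsto_div_add_of_tendsto_div (fun μ => setIntegral_gaussianPDFReal_nonneg μ _)
    (fun μ => setIntegral_gaussianPDFReal_pos hv μ (hTm.diff measurableSet_Iic)
      (Real.volume_ne_zero_of_mem_nhdsGT (sdiff_Iic_mem_nhdsGT hT)))
    (tendsto_setIntegral_gaussianPDFReal_div_atTop hv inter_subset_right
      (sdiff_Iic_mem_nhdsGT hT))

theorem tendsto_truncGaussianCDF_atBot (hv : v ≠ 0) (hTm : MeasurableSet T) (hT : T ∈ 𝓝 x) :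
    Tendsto (truncGaussianCDF v T · x) atBot (𝓝 1) := by
  have hA (μ : ℝ) : 0 < ∫ t in T ∩ Iic x, gaussianPDFReal μ v t :=
    setIntegral_gaussianPDFReal_pos hv μ (hTm.inter measurableSet_Iic)
      (Real.volume_ne_zero_of_mem_nhdsLE (inter_Iic_mem_nhdsLE hT))
  have hB (μ : ℝ) := setIntegral_gaussianPDFReal_nonneg (v := v) μ (T \ Iic x)
  have hcompl := tendsto_div_add_of_tendsto_div hB hA
    (tendsto_setIntegral_gaussianPDFReal_div_atBot hv sdiff_Iic_subset_Ioi
      (inter_Iic_mem_nhdsLE hT))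
  have hcdf : (truncGaussianCDF v T · x) = fun μ => 1 -
      (∫ t in T \ Iic x, gaussianPDFReal μ v t) /
        ((∫ t in T \ Iic x, gaussianPDFReal μ v t) +
          ∫ t in T ∩ Iic x, gaussianPDFReal μ v t) := by
    ext μ
    rw [truncGaussianCDF_eq hv, add_comm (∫ t in T \ Iic x, gaussianPDFReal μ v t),
      eq_sub_iff_add_eq, ← add_div, div_self (add_pos_of_pos_of_nonneg (hA μ) (hB μ)).ne']
  simpa [hcdf] using tendsto_const_nhds.sub hcompl

end ProbabilityTheory

theorem truncated_gaussian_cdf_strictAnti_and_limits_general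
    (σ : ℝ) (hσ : 0 < σ)
    (K : ℕ)
    (l u : Fin K → EReal)
    (T : Set ℝ)
    (hT : T = ⋃ k, {y : ℝ | l k ≤ (y : EReal) ∧ (y : EReal) ≤ u k})
    (F : ℝ → ℝ → ℝ)
    (hF : ∀ μ x, F μ x =
      ((gaussianReal μ (Real.toNNReal (σ ^ 2))) (T ∩ Set.Iic x)).toReal /
        ((gaussianReal μ (Real.toNNReal (σ ^ 2))) T).toReal)
    (x : ℝ) (hx : x ∈ ⋃ k, {y : ℝ | l k < (y : EReal) ∧ (y : EReal) < u k}) :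
    StrictAnti (fun μ => F μ x) ∧
    Tendsto (fun μ => F μ x) atTop (nhds 0) ∧
    Tendsto (fun μ => F μ x) atBot (nhds 1) := by
  have hv : Real.toNNReal (σ ^ 2) ≠ 0 := by simpa using hσ.ne'
  have hTm : MeasurableSet T :=
    hT ▸ MeasurableSet.iUnion fun k => measurable_coe_real_ereal measurableSet_Icc
  have hTx : T ∈ 𝓝 x := by
    refine mem_of_superset ((isOpen_iUnion fun k =>
      isOpen_Ioo.preimage continuous_coe_real_ereal).mem_nhds hx) ?_
    rw [hT]
    exact iUnion_mono fun k y hy => ⟨hy.1.le, hy.2.le⟩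
  have hFx : (fun μ => F μ x) = (truncGaussianCDF (Real.toNNReal (σ ^ 2)) T · x) :=
    funext fun μ => hF μ x
  rw [hFx]
  exact ⟨strictAnti_truncGaussianCDF hv hTm hTx, tendsto_truncGaussianCDF_atTop hv hTm hTx,
    tendsto_truncGaussianCDF_atBot hv hTm hTx⟩

/-- **Truncated Gaussian CDF (Lemma A.2 of Kivaranovic–Leeb).** Let `σ > 0` and
let `-∞ ≤ l₁ < u₁ < l₂ < u₂ < … < l_K < u_K ≤ ∞` (in the extended reals) bound
`K ≥ 1` disjoint intervals with union `T`, and let `F(x; μ, σ)` be the CDF of a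
`N(μ, σ²)` random variable conditioned on lying in `T`. Then, for every fixed
`x` in the union of the corresponding open intervals, `μ ↦ F(x; μ, σ)` is
strictly decreasing on `ℝ`, tends to `0` as `μ → +∞`, and tends to `1` as
`μ → -∞`. -/
theorem truncated_gaussian_cdf_strictAnti_and_limits
    (σ : ℝ) (hσ : 0 < σ)
    (K : ℕ) (hK : 1 ≤ K)
    (l u : Fin K → EReal)
    (hlu : ∀ k, l k < u k)
    (hsep : ∀ k k' : Fin K, (k : ℕ) + 1 = (k' : ℕ) → u k < l k')
    (T : Set ℝ)
    (hT : T = ⋃ k, {y : ℝ | l k ≤ (y : EReal) ∧ (y : EReal) ≤ u k})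
    (F : ℝ → ℝ → ℝ)
    (hF : ∀ μ x, F μ x =
      ((gaussianReal μ (Real.toNNReal (σ ^ 2))) (T ∩ Set.Iic x)).toReal /
        ((gaussianReal μ (Real.toNNReal (σ ^ 2))) T).toReal)
    (x : ℝ) (hx : x ∈ ⋃ k, {y : ℝ | l k < (y : EReal) ∧ (y : EReal) < u k}) :
    StrictAnti (fun μ => F μ x) ∧
    Tendsto (fun μ => F μ x) atTop (nhds 0) ∧
    Tendsto (fun μ => F μ x) atBot (nhds 1) :=
  truncated_gaussian_cdf_strictAnti_and_limits_general σ hσ K l u T hT F hF x hx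
end

section
/- Let R ⊆ {1,…,m}. For realized test statistics x ∈ ℝ^m, the one-sided step-up procedure selects Ŝ ⊇ R if and only if there exist an integer k with 0 ≤ k ≤ m − |R| and a bijection σ of {1,…,m} onto itself such that R ⊆ σ^{-1}({k+1,…,m}), x_{σ^{-1}(j)} < x̄_j for all j = 1,…,k, and x_{σ^{-1}(j)} ≥ x̄_{k+1} for all j = k+1,…,m. -/
open MeasureTheory Filter

variable {m : ℕ}

/-- The one-sided step-up procedure run on `x` selects a set containing `R`. -/
def SelectsStepUpSuperset (xbar : ℕ → ℝ) (x : Fin m → ℝ) (R : Finset (Fin m)) : Prop :=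
  ∃ l : List (Fin m), SortedEnumAsc x l ∧ R ⊆ (stepUpInsig xbar x l 1)ᶜ


/-!
Along an ascending enumeration of the statistics the step-up walk stops at some step `n`,
declaring exactly the first `n` sorted indices insignificant. Hence `Ŝ ⊇ R` yields the
condition with `k = n` and `σ` the rank permutation. Conversely, `σ` sends every index with
statistic below `x̄_{k+1}` into the first `k` positions, so there are at most `k` of them and
the walk stops by step `k + 1`; an index it declares insignificant at step `i + 1 ≤ k` has
statistic below `x̄_{i+1} ≤ x̄_{k+1}`, whereas every `r ∈ R` has statistic at least `x̄_{k+1}`.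
-/

open Finset

theorem exists_sortedEnumAsc (x : Fin m → ℝ) : ∃ l, SortedEnumAsc x l := by
  refine ⟨(List.finRange m).map (Tuple.sort x), (List.nodup_finRange m).map (Tuple.sort x).injective,
    fun i => List.mem_map.mpr ⟨(Tuple.sort x).symm i, List.mem_finRange _, by simp⟩, ?_⟩
  exact (List.pairwise_lt_finRange m).map _ fun a b hab => Tuple.monotone_sort x hab.le

namespace SortedEnumAsc

variable {x : Fin m → ℝ} {l : List (Fin m)}

theorem length_eq (hl : SortedEnumAsc x l) : l.length = m := by
  simpa using Fintype.card_congr (hl.1.getEquivOfForallMemList l hl.2.1)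

theorem le_of_le (hl : SortedEnumAsc x l) {i j : ℕ} (hi : i < l.length) (hj : j < l.length)
    (hij : i ≤ j) : x l[i] ≤ x l[j] := by
  rcases hij.eq_or_lt with rfl | hlt
  · rfl
  · exact List.pairwise_iff_getElem.mp hl.2.2 i j hi hj hlt

/-- `hl.rank i` is the zero-based position of `i` in `l`. -/
def rank (hl : SortedEnumAsc x l) : Equiv.Perm (Fin m) :=
  ((finCongr hl.length_eq.symm).trans (hl.1.getEquivOfForallMemList l hl.2.1)).symm

theorem rank_symm_apply (hl : SortedEnumAsc x l) (j : Fin m) :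
    hl.rank.symm j = l[(j : ℕ)]'(j.2.trans_eq hl.length_eq.symm) := by
  simp [rank]

theorem getElem_rank (hl : SortedEnumAsc x l) (a : Fin m) :
    l[(hl.rank a : ℕ)]'((hl.rank a).2.trans_eq hl.length_eq.symm) = a := by
  rw [← hl.rank_symm_apply, Equiv.symm_apply_apply]

theorem card_toFinset_take (hl : SortedEnumAsc x l) {n : ℕ} (hn : n ≤ l.length) :
    #(l.take n).toFinset = n := by
  rw [List.toFinset_card_of_nodup (hl.1.sublist (List.take_sublist _ _)), List.length_take]
  omega

theorem mem_take_iff_rank_lt (hl : SortedEnumAsc x l) {a : Fin m} {n : ℕ} :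
    a ∈ l.take n ↔ (hl.rank a : ℕ) < n := by
  have hlen := hl.length_eq
  rw [List.mem_take_iff_getElem]
  constructor
  · rintro ⟨i, hi, rfl⟩
    have hsymm : hl.rank.symm ⟨i, by omega⟩ = l[i] := hl.rank_symm_apply _
    rw [← hsymm, Equiv.apply_symm_apply]
    exact lt_of_lt_of_le hi (min_le_left _ _)
  · intro ha
    exact ⟨hl.rank a, by omega, hl.getElem_rank a⟩

end SortedEnumAsc

theorem exists_stepUpInsig_eq_take (xbar : ℕ → ℝ) (x : Fin m → ℝ) (l : List (Fin m)) (j : ℕ) :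
    ∃ n ≤ l.length, stepUpInsig xbar x l j = (l.take n).toFinset ∧
      (∀ i (hi : i < l.length), i < n → x l[i] < xbar (i + j)) ∧
      (∀ hn : n < l.length, xbar (n + j) ≤ x l[n]) := by
  induction l generalizing j with
  | nil => exact ⟨0, le_rfl, rfl, by simp, by simp⟩
  | cons h t ih =>
    by_cases hstop : xbar j ≤ x h
    · exact ⟨0, Nat.zero_le _, by simp [stepUpInsig, hstop], by simp, fun _ => by simpa using hstop⟩
    obtain ⟨n, hn, heq, hlt, hge⟩ := ih (j + 1)
    refine ⟨n + 1, by simpa using hn, by simp [stepUpInsig, hstop, heq], ?_, fun hn' => ?_⟩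
    · rintro (_ | i) hi hin
      · simpa using not_le.mp hstop
      · simpa [Nat.add_right_comm, Nat.add_assoc] using hlt i (by simpa using hi) (by omega)
    · simpa [Nat.add_right_comm, Nat.add_assoc] using hge (by simpa using hn')

theorem card_filter_lt_le_of_perm {x : Fin m → ℝ} {c : ℝ} {k : ℕ} (σ : Equiv.Perm (Fin m))
    (h : ∀ j : Fin m, k ≤ (j : ℕ) → c ≤ x (σ.symm j)) : #{i | x i < c} ≤ k := by
  calc #{i | x i < c} ≤ #(range k) := by
        refine card_le_card_of_injOn (fun i => (σ i : ℕ)) (fun i hi => ?_) ?_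
        · have hxi : x i < c := by simpa using hi
          simp only [coe_range, Set.mem_Iio]
          by_contra! hik
          exact (h (σ i) hik).not_gt (by simpa using hxi)
        · exact fun a _ b _ hab => σ.injective (Fin.ext hab)
    _ = k := card_range k

theorem SortedEnumAsc.le_of_card_filter_lt_le {x : Fin m → ℝ} {l : List (Fin m)}
    (hl : SortedEnumAsc x l) {xbar : ℕ → ℝ} {n k : ℕ} (hn : n ≤ l.length)
    (hlt : ∀ i (hi : i < l.length), i < n → x l[i] < xbar (i + 1))
    (hcard : #{i | x i < xbar (k + 1)} ≤ k) : n ≤ k := by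
  by_contra! hkn
  have hsub : (l.take (k + 1)).toFinset ⊆ ({i | x i < xbar (k + 1)} : Finset _) := by
    intro a ha
    obtain ⟨i, hi, rfl⟩ := List.mem_iff_getElem.mp (List.mem_toFinset.mp ha)
    simp only [List.length_take] at hi
    simp only [List.getElem_take, mem_filter, mem_univ, true_and]
    exact (hl.le_of_le _ (by omega) (by omega)).trans_lt (hlt k (by omega) hkn)
  have := card_le_card hsub
  rw [hl.card_toFinset_take (by omega)] at this
  omega

/-- Positions are zero-based: `σ h = j` means that `h` has rank `j + 1`. -/
theorem stepup_superset_geometry_general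
    (xbar : ℕ → ℝ) (hxmono : ∀ j k, 1 ≤ j → j ≤ k → k ≤ m → xbar j ≤ xbar k)
    (x : Fin m → ℝ) (R : Finset (Fin m)) :
    SelectsStepUpSuperset xbar x R ↔
      ∃ k : ℕ, k ≤ m - R.card ∧
        ∃ σ : Equiv.Perm (Fin m),
          (∀ r ∈ R, k ≤ (σ r : ℕ)) ∧
          (∀ j : Fin m, (j : ℕ) + 1 ≤ k → x (σ.symm j) < xbar ((j : ℕ) + 1)) ∧
          (∀ j : Fin m, k ≤ (j : ℕ) → xbar (k + 1) ≤ x (σ.symm j)) := by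
  constructor
  · rintro ⟨l, hl, hR⟩
    obtain ⟨n, hn, heq, hlt, hstop⟩ := exists_stepUpInsig_eq_take xbar x l 1
    have hlen := hl.length_eq
    rw [heq] at hR
    refine ⟨n, ?_, hl.rank, fun r hr => ?_, fun j hj => ?_, fun j hj => ?_⟩
    · have := card_le_card hR
      rw [card_compl, hl.card_toFinset_take hn, Fintype.card_fin] at this
      omega
    · by_contra! hrn
      exact mem_compl.mp (hR hr) (List.mem_toFinset.mpr (hl.mem_take_iff_rank_lt.mpr hrn))
    · rw [hl.rank_symm_apply]
      exact hlt j _ (by omega)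
    · rw [hl.rank_symm_apply]
      exact (hstop (by omega)).trans (hl.le_of_le _ _ hj)
  · rintro ⟨k, -, σ, hR, -, hhigh⟩
    obtain ⟨l, hl⟩ := exists_sortedEnumAsc x
    obtain ⟨n, hn, heq, hlt, -⟩ := exists_stepUpInsig_eq_take xbar x l 1
    have hnk := hl.le_of_card_filter_lt_le hn hlt (card_filter_lt_le_of_perm σ hhigh)
    refine ⟨l, hl, fun r hr => mem_compl.mpr fun hmem => ?_⟩
    rw [heq, List.mem_toFinset, hl.mem_take_iff_rank_lt] at hmem
    have hkm : k < m := (hR r hr).trans_lt (σ r).2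
    have hbelow : x r < xbar (hl.rank r + 1) := by
      simpa only [hl.getElem_rank] using hlt (hl.rank r) (by omega) hmem
    have habove : xbar (k + 1) ≤ x r := by simpa using hhigh (σ r) (hR r hr)
    linarith [hxmono (hl.rank r + 1) (k + 1) (by omega) (by omega) (by omega)]

/-- **Geometry of the event `Ŝ ⊇ R` for one-sided step-up rules.** The one-sided
step-up procedure selects `Ŝ ⊇ R` if and only if there exist `k` with
`0 ≤ k ≤ m - |R|` and a bijection `σ` of `{1,…,m}` (here a permutation of
`Fin m`, whose one-based rank of `h` is `σ h + 1`) such that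
`R ⊆ σ⁻¹({k+1,…,m})`, `x_{σ⁻¹(j)} < x̄_j` for `j = 1,…,k`, and
`x_{σ⁻¹(j)} ≥ x̄_{k+1}` for `j = k+1,…,m`. -/
theorem stepup_superset_geometry
    (hm : 0 < m)
    (xbar : ℕ → ℝ) (hxmono : ∀ j k, 1 ≤ j → j ≤ k → k ≤ m → xbar j ≤ xbar k)
    (x : Fin m → ℝ) (R : Finset (Fin m)) :
    SelectsStepUpSuperset xbar x R ↔
      ∃ k : ℕ, k ≤ m - R.card ∧
        ∃ σ : Equiv.Perm (Fin m),
          (∀ r ∈ R, k ≤ (σ r : ℕ)) ∧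
          (∀ j : Fin m, (j : ℕ) + 1 ≤ k → x (σ.symm j) < xbar ((j : ℕ) + 1)) ∧
          (∀ j : Fin m, k ≤ (j : ℕ) → xbar (k + 1) ≤ x (σ.symm j)) :=
  stepup_superset_geometry_general xbar hxmono x R
end

section
/- Let M be a metric space equipped with its Borel σ-algebra, let P and P_n (n ∈ ℕ) be probability measures on M with P_n ⇒ P (weak convergence), and let S and S_n (n ∈ ℕ) be Borel subsets of M. Assume P(∂S) = 0 (where ∂S is the topological boundary of S), P(S) = p* > 0, and P_n(S △ S_n) → 0 as n → ∞, where △ denotes the symmetric set difference. Then the conditional distributions converge weakly: for X_n ~ P_n and X ~ P, the law of X_n given X_n ∈ S_n converges weakly to the law of X given X ∈ S; equivalently, the normalized restricted measures A ↦ P_n(A ∩ S_n)/P_n(S_n) converge weakly to A ↦ P(A ∩ S)/P(S). -/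
open MeasureTheory ProbabilityTheory Filter Topology Set
open BoundedContinuousFunction
open scoped symmDiff ENNReal

/-! By the portmanteau theorem the conditioned measures `Pₙ[|S]` converge weakly to `P[|S]`:
since `∂S` is `P`-null, `P(S ∩ G) ≤ P(int S ∩ G) ≤ liminf Pₙ(S ∩ G)` for open `G`, while
`Pₙ(S) → P(S) > 0`. Hence `∫_S f dPₙ → ∫_S f dP` for bounded continuous `f`, and replacing `S`
by `Sₙ` changes this integral by at most `‖f‖ Pₙ(S △ Sₙ) → 0`. Taking `f = 1` gives
`Pₙ(Sₙ) → P(S)`, and dividing yields the claim. -/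

section SetIntegral

variable {Ω E : Type*} [MeasurableSpace Ω] [NormedAddCommGroup E] [NormedSpace ℝ E]

lemma integral_cond_eq_inv_smul_setIntegral (μ : Measure Ω) (s : Set Ω) (f : Ω → E) :
    ∫ x, f x ∂μ[|s] = (μ.real s)⁻¹ • ∫ x in s, f x ∂μ := by
  rw [ProbabilityTheory.cond, integral_smul_measure, ENNReal.toReal_inv, measureReal_def]

lemma setIntegral_eq_measureReal_smul_integral_cond {μ : Measure Ω} {s : Set Ω} (hs : μ s ≠ ∞)
    (f : Ω → E) : ∫ x in s, f x ∂μ = μ.real s • ∫ x, f x ∂μ[|s] := by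
  rcases eq_or_ne (μ s) 0 with h | h
  · simp [Measure.restrict_eq_zero.2 h, measureReal_def, h]
  · rw [integral_cond_eq_inv_smul_setIntegral, smul_inv_smul₀ (measureReal_ne_zero_iff hs |>.2 h)]

lemma norm_setIntegral_sub_setIntegral_le {μ : Measure Ω} [IsFiniteMeasure μ] {f : Ω → E}
    (hf : Integrable f μ) {C : ℝ} (hC : ∀ x, ‖f x‖ ≤ C) {s t : Set Ω} (hs : MeasurableSet s)
    (ht : MeasurableSet t) :
    ‖∫ x in s, f x ∂μ - ∫ x in t, f x ∂μ‖ ≤ C * μ.real (s ∆ t) := by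
  have hpointwise : ∀ x, ‖s.indicator f x - t.indicator f x‖ ≤ (s ∆ t).indicator (fun _ ↦ C) x := by
    intro x
    by_cases hxs : x ∈ s <;> by_cases hxt : x ∈ t <;>
      simp [hxs, hxt, Set.mem_symmDiff, hC x]
  rw [← integral_indicator hs, ← integral_indicator ht, ← integral_sub
    (hf.indicator hs) (hf.indicator ht)]
  calc ‖∫ x, s.indicator f x - t.indicator f x ∂μ‖
      ≤ ∫ x, (s ∆ t).indicator (fun _ ↦ C) x ∂μ :=
        norm_integral_le_of_norm_le ((integrable_const C).indicator (hs.symmDiff ht))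
          (Eventually.of_forall hpointwise)
    _ = C * μ.real (s ∆ t) := by
        rw [integral_indicator_const _ (hs.symmDiff ht), smul_eq_mul, mul_comm]

lemma tendsto_setIntegral_of_tendsto_measure_symmDiff {ι : Type*} {L : Filter ι}
    {μs : ι → Measure Ω} [∀ i, IsFiniteMeasure (μs i)] {f : Ω → E}
    (hf : ∀ i, Integrable f (μs i)) {C : ℝ} (hC : ∀ x, ‖f x‖ ≤ C) {s : Set Ω} {t : ι → Set Ω}
    (hs : MeasurableSet s) (ht : ∀ i, MeasurableSet (t i)) {a : E}
    (hlim : Tendsto (fun i ↦ ∫ x in s, f x ∂μs i) L (𝓝 a))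
    (hsymm : Tendsto (fun i ↦ μs i (s ∆ t i)) L (𝓝 0)) :
    Tendsto (fun i ↦ ∫ x in t i, f x ∂μs i) L (𝓝 a) := by
  have hsymm_real : Tendsto (fun i ↦ C * (μs i).real (s ∆ t i)) L (𝓝 0) := by
    simpa [measureReal_def] using
      ((ENNReal.tendsto_toReal ENNReal.zero_ne_top).comp hsymm).const_mul C
  have hdiff : Tendsto (fun i ↦ ∫ x in s, f x ∂μs i - ∫ x in t i, f x ∂μs i) L (𝓝 0) :=
    squeeze_zero_norm (fun i ↦ norm_setIntegral_sub_setIntegral_le (hf i) hC hs (ht i))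
      hsymm_real
  simpa using hlim.sub hdiff

end SetIntegral

section Portmanteau

variable {Ω : Type*} [MeasurableSpace Ω] [TopologicalSpace Ω]

lemma measure_inter_le_liminf_measure_inter_of_null_frontier {ι : Type*} {L : Filter ι}
    {μ : Measure Ω} {μs : ι → Measure Ω}
    (h_opens : ∀ G, IsOpen G → μ G ≤ L.liminf fun i ↦ μs i G) {S : Set Ω}
    (hS : μ (frontier S) = 0) {G : Set Ω} (hG : IsOpen G) :
    μ (S ∩ G) ≤ L.liminf fun i ↦ μs i (S ∩ G) := by
  have hsub : S ∩ G ⊆ (interior S ∩ G) ∪ frontier S := by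
    rintro x ⟨hxS, hxG⟩
    by_cases hx : x ∈ interior S
    · exact Or.inl ⟨hx, hxG⟩
    · exact Or.inr ⟨subset_closure hxS, hx⟩
  calc μ (S ∩ G) ≤ μ (interior S ∩ G) + μ (frontier S) :=
        (measure_mono hsub).trans (measure_union_le _ _)
    _ = μ (interior S ∩ G) := by rw [hS, add_zero]
    _ ≤ L.liminf fun i ↦ μs i (interior S ∩ G) := h_opens _ (isOpen_interior.inter hG)
    _ ≤ L.liminf fun i ↦ μs i (S ∩ G) :=
        liminf_le_liminf (Eventually.of_forall fun i ↦
          measure_mono (inter_subset_inter_left G interior_subset))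

variable [OpensMeasurableSpace Ω]

lemma cond_le_liminf_cond_of_null_frontier {ι : Type*} {L : Filter ι} [L.NeBot]
    {μ : Measure Ω} [IsProbabilityMeasure μ] {μs : ι → Measure Ω} [∀ i, IsProbabilityMeasure (μs i)]
    (h_opens : ∀ G, IsOpen G → μ G ≤ L.liminf fun i ↦ μs i G) {S : Set Ω}
    (hS : μ (frontier S) = 0) {G : Set Ω} (hG : IsOpen G) :
    μ[G|S] ≤ L.liminf fun i ↦ (μs i)[G|S] := by
  have hmass : Tendsto (fun i ↦ (μs i S)⁻¹) L (𝓝 (μ S)⁻¹) :=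
    (tendsto_measure_of_null_frontier h_opens hS).inv
  simp only [cond_apply' hG.measurableSet]
  calc (μ S)⁻¹ * μ (S ∩ G)
      ≤ (L.liminf fun i ↦ (μs i S)⁻¹) * L.liminf fun i ↦ μs i (S ∩ G) := by
        rw [hmass.liminf_eq]
        exact mul_le_mul_right
          (measure_inter_le_liminf_measure_inter_of_null_frontier h_opens hS hG) _
    _ ≤ L.liminf fun i ↦ (μs i S)⁻¹ * μs i (S ∩ G) := ENNReal.le_liminf_mul

lemma tendsto_integral_cond_of_null_frontier {μ : Measure Ω} [IsProbabilityMeasure μ]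
    {μs : ℕ → Measure Ω} [∀ n, IsProbabilityMeasure (μs n)]
    (h_opens : ∀ G, IsOpen G → μ G ≤ atTop.liminf fun n ↦ μs n G) {S : Set Ω}
    (hS : μ (frontier S) = 0) (hpos : μ S ≠ 0) (hne : ∀ n, μs n S ≠ 0) (f : Ω →ᵇ ℝ) :
    Tendsto (fun n ↦ ∫ x, f x ∂(μs n)[|S]) atTop (𝓝 (∫ x, f x ∂μ[|S])) := by
  have := cond_isProbabilityMeasure hpos
  have := fun n ↦ cond_isProbabilityMeasure (hne n)
  refine tendsto_integral_of_forall_integral_le_liminf_integral (fun g hg ↦ ?_) f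
  exact integral_le_liminf_integral_of_forall_isOpen_measure_le_liminf_measure hg
    fun G hG ↦ cond_le_liminf_cond_of_null_frontier h_opens hS hG

variable [HasOuterApproxClosed Ω]

lemma le_liminf_measure_open_of_forall_tendsto_integral {ι : Type*} {L : Filter ι}
    {μ : Measure Ω} [IsProbabilityMeasure μ] {μs : ι → Measure Ω}
    [∀ i, IsProbabilityMeasure (μs i)]
    (hconv : ∀ f : Ω →ᵇ ℝ, Tendsto (fun i ↦ ∫ x, f x ∂μs i) L (𝓝 (∫ x, f x ∂μ)))
    {G : Set Ω} (hG : IsOpen G) :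
    μ G ≤ L.liminf fun i ↦ μs i G :=
  ProbabilityMeasure.le_liminf_measure_open_of_tendsto (μ := ⟨μ, ‹_›⟩)
    (μs := fun i ↦ ⟨μs i, inferInstance⟩)
    (ProbabilityMeasure.tendsto_iff_forall_integral_tendsto.2 hconv) hG

lemma tendsto_setIntegral_of_null_frontier {μ : Measure Ω} [IsProbabilityMeasure μ]
    {μs : ℕ → Measure Ω} [∀ n, IsProbabilityMeasure (μs n)]
    (hconv : ∀ f : Ω →ᵇ ℝ, Tendsto (fun n ↦ ∫ x, f x ∂μs n) atTop (𝓝 (∫ x, f x ∂μ)))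
    {S : Set Ω} (hS : μ (frontier S) = 0) (hpos : μ S ≠ 0) (f : Ω →ᵇ ℝ) :
    Tendsto (fun n ↦ ∫ x in S, f x ∂μs n) atTop (𝓝 (∫ x in S, f x ∂μ)) := by
  have hmass : Tendsto (fun n ↦ μs n S) atTop (𝓝 (μ S)) :=
    tendsto_measure_of_null_frontier
      (fun G hG ↦ le_liminf_measure_open_of_forall_tendsto_integral hconv hG) hS
  -- `μs n [|S]` is a probability measure only once `μs n S ≠ 0`, so we pass to a tail.
  obtain ⟨N, hN⟩ := eventually_atTop.1 (hmass.eventually_ne hpos)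
  have h_opensN : ∀ G, IsOpen G → μ G ≤ atTop.liminf fun n ↦ μs (n + N) G :=
    fun G ↦ le_liminf_measure_open_of_forall_tendsto_integral
      fun g ↦ (hconv g).comp (tendsto_add_atTop_nat N)
  have hmassN : Tendsto (fun n ↦ (μs (n + N)).real S) atTop (𝓝 (μ.real S)) :=
    (ENNReal.tendsto_toReal (measure_ne_top μ S)).comp
      (hmass.comp (tendsto_add_atTop_nat N))
  have hcondN := tendsto_integral_cond_of_null_frontier h_opensN hS hpos
    (fun n ↦ hN _ (Nat.le_add_left N n)) f
  refine (tendsto_add_atTop_iff_nat N).1 ?_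
  simp_rw [setIntegral_eq_measureReal_smul_integral_cond (measure_ne_top _ S)]
  exact hmassN.smul hcondN

end Portmanteau

/-- **Convergence of conditional probability measures (Lemma A.4).** Let `P` and
`Pₙ` be probability measures on a metric space `M` with `Pₙ ⇒ P` (weakly, i.e.
integrals of bounded continuous functions converge), and let `S`, `Sₙ` be Borel
sets with `P(∂S) = 0`, `P(S) = p* > 0` and `Pₙ(S △ Sₙ) → 0`. Then the
conditional measures `Pₙ(· ∩ Sₙ)/Pₙ(Sₙ)` converge weakly to `P(· ∩ S)/P(S)`. -/
theorem conditional_weak_convergence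
    {M : Type*} [MetricSpace M] [MeasurableSpace M] [BorelSpace M]
    (P : Measure M) [IsProbabilityMeasure P]
    (Pn : ℕ → Measure M) (hPn : ∀ n, IsProbabilityMeasure (Pn n))
    (hconv : ∀ f : BoundedContinuousFunction M ℝ,
      Tendsto (fun n => ∫ x, f x ∂(Pn n)) atTop (nhds (∫ x, f x ∂P)))
    (S : Set M) (Sn : ℕ → Set M)
    (hS : MeasurableSet S) (hSn : ∀ n, MeasurableSet (Sn n))
    (hfrontier : P (frontier S) = 0)
    (hpos : P S ≠ 0)
    (hsymmdiff : Tendsto (fun n => Pn n (symmDiff S (Sn n))) atTop (nhds 0)) :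
    ∀ f : BoundedContinuousFunction M ℝ,
      Tendsto (fun n => ∫ x, f x ∂((Pn n)[|Sn n])) atTop (nhds (∫ x, f x ∂(P[|S]))) := by
  have := hPn
  have hsetIntegral : ∀ g : M →ᵇ ℝ,
      Tendsto (fun n ↦ ∫ x in Sn n, g x ∂Pn n) atTop (𝓝 (∫ x in S, g x ∂P)) :=
    fun g ↦ tendsto_setIntegral_of_tendsto_measure_symmDiff (fun n ↦ g.integrable _)
      g.norm_coe_le_norm hS hSn (tendsto_setIntegral_of_null_frontier hconv hfrontier hpos g)
      hsymmdiff
  have hmass : Tendsto (fun n ↦ (Pn n).real (Sn n)) atTop (𝓝 (P.real S)) := by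
    simpa using hsetIntegral 1
  intro f
  simp_rw [integral_cond_eq_inv_smul_setIntegral]
  exact (hmass.inv₀ ((measureReal_ne_zero_iff (measure_ne_top P S)).2 hpos)).smul (hsetIntegral f)
end

section
/- Let Φ denote the standard normal CDF, let x̄ > 0, and let X > x̄. Then the conditional probability that a N(X,1) random variable W satisfies W ≤ X given |W| ≥ x̄ equals (0.5 − Φ(x̄ − X) + Φ(−x̄ − X)) / (1 − Φ(x̄ − X) + Φ(−x̄ − X)), and this quantity is strictly less than 0.5. Consequently, in the univariate two-sided testing problem the median-unbiased estimator always corrects the conventional estimator toward zero when the observed statistic is significantly positive. -/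
open MeasureTheory ProbabilityTheory
open scoped ENNReal

lemma my_gauss_Ioc_pos (a b : ℝ) (h : a < b) : 0 < gaussianReal 0 1 (Set.Ioc a b) := by
  rw [pos_iff_ne_zero]
  intro h0
  have hv := gaussianReal_absolutelyContinuous' 0 one_ne_zero h0
  rw [Real.volume_Ioc, ENNReal.ofReal_eq_zero] at hv
  linarith

lemma my_gauss_singleton (m x : ℝ) : gaussianReal m 1 {x} = 0 := by
  apply gaussianReal_absolutelyContinuous m one_ne_zero
  simp

lemma my_gauss_shift (X t : ℝ) :
    gaussianReal X 1 (Set.Iic t) = gaussianReal 0 1 (Set.Iic (t - X)) := by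
  have h : (gaussianReal 0 1).map (· + X) = gaussianReal X 1 := by
    rw [gaussianReal_map_add_const]; norm_num
  rw [← h, Measure.map_apply (measurable_add_const X) measurableSet_Iic]
  congr 1
  ext w
  simp [Set.mem_Iic, ← sub_le_iff_le_add]

lemma my_gauss_neg_map :
    (gaussianReal (0:ℝ) 1).map (fun x => -x) = gaussianReal 0 1 := by
  have h := gaussianReal_map_const_mul (μ := 0) (v := 1) (-1)
  simp only [neg_one_mul, mul_zero] at h
  convert h using 2
  ext
  norm_num

lemma my_gauss_half : gaussianReal (0:ℝ) 1 (Set.Iic 0) = 1/2 := by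
  have h1 : gaussianReal (0:ℝ) 1 (Set.Iic 0) = gaussianReal 0 1 (Set.Ici 0) := by
    conv_lhs => rw [← my_gauss_neg_map]
    rw [Measure.map_apply measurable_neg measurableSet_Iic]
    congr 1
    ext w
    simp
  have h2 : gaussianReal (0:ℝ) 1 (Set.Ici 0) = gaussianReal 0 1 (Set.Ioi 0) := by
    rw [measure_congr (Ioi_ae_eq_Ici' (my_gauss_singleton 0 0)).symm]
  have h3 : gaussianReal (0:ℝ) 1 (Set.Iic 0) + gaussianReal 0 1 (Set.Ioi 0) = 1 := by
    rw [← measure_union (by simp [Set.disjoint_left]) measurableSet_Ioi]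
    simp [Set.Iic_union_Ioi]
  rw [h1, h2] at h3
  have h4 : (2 : ℝ≥0∞) * gaussianReal 0 1 (Set.Ioi 0) = 1 := by
    rw [two_mul]; exact h3
  rw [h1, h2, ← h4]
  rw [ENNReal.eq_div_iff (by norm_num) (by norm_num), mul_comm]

/-- **Univariate downward correction under two-sided selection.** Let `Φ` be the
standard normal CDF, `x̄ > 0` and `X > x̄`. The conditional probability that a
`N(X,1)` random variable `W` satisfies `W ≤ X` given `|W| ≥ x̄` equals
`(0.5 - Φ(x̄ - X) + Φ(-x̄ - X)) / (1 - Φ(x̄ - X) + Φ(-x̄ - X))`, and this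
quantity is strictly less than `0.5`; hence the median-unbiased estimator
corrects the conventional estimator toward zero. -/
theorem univariate_twosided_downward_correction
    (xb X : ℝ) (hxb : 0 < xb) (hX : xb < X)
    (Φ : ℝ → ℝ) (hΦ : ∀ t, Φ t = ((gaussianReal 0 1) (Set.Iic t)).toReal) :
    ((gaussianReal X 1) {w : ℝ | w ≤ X ∧ xb ≤ |w|}).toReal /
        ((gaussianReal X 1) {w : ℝ | xb ≤ |w|}).toReal =
      (0.5 - Φ (xb - X) + Φ (-xb - X)) / (1 - Φ (xb - X) + Φ (-xb - X)) ∧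
    (0.5 - Φ (xb - X) + Φ (-xb - X)) / (1 - Φ (xb - X) + Φ (-xb - X)) < 0.5 := by
  set μ := gaussianReal X 1 with hμ
  set ν := gaussianReal (0:ℝ) 1 with hν
  -- Φ basics
  have hfin : ∀ s : Set ℝ, ν s ≠ ⊤ := fun s => measure_ne_top ν s
  have hfinμ : ∀ s : Set ℝ, μ s ≠ ⊤ := fun s => measure_ne_top μ s
  -- strict monotonicity of Φ
  have hmono : ∀ a b : ℝ, a < b → Φ a < Φ b := by
    intro a b hab
    have hsplit : ν (Set.Iic b) = ν (Set.Iic a) + ν (Set.Ioc a b) := by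
      rw [← Set.Iic_union_Ioc_eq_Iic hab.le,
        measure_union (by simp [Set.disjoint_left]; intros; linarith) measurableSet_Ioc]
    rw [hΦ a, hΦ b, hsplit, ENNReal.toReal_add (hfin _) (hfin _)]
    have := my_gauss_Ioc_pos a b hab
    have hpos : 0 < (ν (Set.Ioc a b)).toReal := ENNReal.toReal_pos this.ne' (hfin _)
    linarith
  have hnn : ∀ t, 0 ≤ Φ t := fun t => by rw [hΦ]; exact ENNReal.toReal_nonneg
  have hle1 : ∀ t, Φ t ≤ 1 := by
    intro t
    rw [hΦ]
    exact ENNReal.toReal_le_of_le_ofReal one_pos.le (by simpa using prob_le_one (μ := ν) (s := Set.Iic t))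
  have hlt1 : ∀ t, Φ t < 1 := fun t => lt_of_lt_of_le (hmono t (t+1) (by linarith)) (hle1 _)
  -- Φ 0 = 0.5
  have hΦ0 : Φ 0 = 0.5 := by
    rw [hΦ, my_gauss_half]; norm_num
  -- measures of pieces
  have hIic : ∀ t, (μ (Set.Iic t)).toReal = Φ (t - X) := by
    intro t; rw [hμ, my_gauss_shift, hΦ]
  -- split the sets
  have hsetA : {w : ℝ | w ≤ X ∧ xb ≤ |w|} = Set.Iic (-xb) ∪ Set.Icc xb X := by
    ext w
    simp only [Set.mem_setOf_eq, Set.mem_union, Set.mem_Iic, Set.mem_Icc, le_abs]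
    constructor
    · rintro ⟨h1, h2 | h2⟩
      · right; exact ⟨h2, h1⟩
      · left; linarith
    · rintro (h | ⟨h1, h2⟩)
      · exact ⟨by linarith, Or.inr (by linarith)⟩
      · exact ⟨h2, Or.inl h1⟩
  have hsetB : {w : ℝ | xb ≤ |w|} = Set.Iic (-xb) ∪ Set.Ici xb := by
    ext w
    simp only [Set.mem_setOf_eq, Set.mem_union, Set.mem_Iic, Set.mem_Ici, le_abs]
    constructor
    · rintro (h | h)
      · right; exact h
      · left; linarith
    · rintro (h | h)
      · right; linarith
      · left; exact h
  have hdisj : Disjoint (Set.Iic (-xb)) (Set.Icc xb X) := by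
    simp only [Set.disjoint_left, Set.mem_Iic, Set.mem_Icc]
    intro w hw ⟨h1, _⟩; linarith
  have hdisj2 : Disjoint (Set.Iic (-xb)) (Set.Ici xb) := by
    simp only [Set.disjoint_left, Set.mem_Iic, Set.mem_Ici]
    intro w hw h; linarith
  have hA : (μ {w : ℝ | w ≤ X ∧ xb ≤ |w|}).toReal
      = Φ (-xb - X) + (0.5 - Φ (xb - X)) := by
    rw [hsetA, measure_union hdisj measurableSet_Icc,
      ENNReal.toReal_add (hfinμ _) (hfinμ _), hIic]
    congr 1
    -- μ (Icc xb X) = μ (Iic X) - μ (Iio xb), via Iic X = Iio xb ∪ Icc xb X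
    have hsplit : (μ (Set.Iic X)).toReal
        = (μ (Set.Iio xb)).toReal + (μ (Set.Icc xb X)).toReal := by
      rw [← ENNReal.toReal_add (hfinμ _) (hfinμ _),
        ← measure_union (by simp [Set.disjoint_left]; intros; linarith) measurableSet_Icc,
        Set.Iio_union_Icc_eq_Iic hX.le]
    have hIio : (μ (Set.Iio xb)).toReal = Φ (xb - X) := by
      rw [measure_congr (Iio_ae_eq_Iic' (my_gauss_singleton X xb)), hIic]
    rw [hIio] at hsplit
    have hIicX : (μ (Set.Iic X)).toReal = 0.5 := by
      rw [hIic, sub_self, hΦ0]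
    linarith
  have hB : (μ {w : ℝ | xb ≤ |w|}).toReal
      = Φ (-xb - X) + (1 - Φ (xb - X)) := by
    rw [hsetB, measure_union hdisj2 measurableSet_Ici,
      ENNReal.toReal_add (hfinμ _) (hfinμ _), hIic]
    congr 1
    have hsplit : (1:ℝ) = (μ (Set.Iio xb)).toReal + (μ (Set.Ici xb)).toReal := by
      rw [← ENNReal.toReal_add (hfinμ _) (hfinμ _),
        ← measure_union (by simp [Set.disjoint_left]) measurableSet_Ici,
        Set.Iio_union_Ici]
      simp
    have hIio : (μ (Set.Iio xb)).toReal = Φ (xb - X) := by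
      rw [measure_congr (Iio_ae_eq_Iic' (my_gauss_singleton X xb)), hIic]
    rw [hIio] at hsplit
    linarith
  -- key inequality facts
  have hΦlt : Φ (-xb - X) < Φ (xb - X) := hmono _ _ (by linarith)
  have hDpos : 0 < 1 - Φ (xb - X) + Φ (-xb - X) := by
    have := hlt1 (xb - X); have := hnn (-xb - X); linarith
  constructor
  · rw [hA, hB]
    ring_nf
  · rw [div_lt_iff₀ hDpos]
    have := hnn (-xb - X)
    nlinarith
end
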